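/- arXiv:0709.0515 — 17 statements merged into one kernel-verified Lean document; each statement's English description precedes it below -/
import Mathlib

section
/- Let R be a (σ,δ)-skew Armendariz ring satisfying condition (C_σ). If a,b ∈ R with ab = 0, then σ(a)b = 0 and δ(a)b = 0 (hence σⁿ(a)b = δⁿ(a)b = 0 for all n ≥ 1). -/
open Finset

/-- δ is a σ-derivation: δ(ab) = σ(a)δ(b) + δ(a)b. -/
def IsSigmaDerivation {R : Type*} [Ring R] (σ : R →+* R) (δ : R →+ R) : Prop :=
  ∀ a b : R, δ (a * b) = σ a * δ b + δ a * b

/-- `S` together with `ι : R →+* S` and `X : S` is the Ore extension `R[x;σ,δ]`: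
`X·a = σ(a)·X + δ(a)`, every element is a polynomial in `X` with coefficients from `R`,
and such representations have unique coefficients. -/
structure IsOreExtension {R S : Type*} [Ring R] [Ring S] (σ : R →+* R) (δ : R →+ R)
    (ι : R →+* S) (X : S) : Prop where
  commute : ∀ a : R, X * ι a = ι (σ a) * X + ι (δ a)
  span : ∀ s : S, ∃ (n : ℕ) (c : ℕ → R), s = ∑ i ∈ Finset.range (n + 1), ι (c i) * X ^ i
  indep : ∀ (n : ℕ) (c : ℕ → R),
    (∑ i ∈ Finset.range (n + 1), ι (c i) * X ^ i) = 0 → ∀ i ≤ n, c i = 0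

/-- `R` is (σ,δ)-skew Armendariz: `fg = 0` implies `aᵢxⁱ·bⱼxʲ = 0` for all coefficients. -/
def SkewArmendarizSD {R S : Type*} [Ring R] [Ring S] (ι : R →+* S) (X : S) : Prop :=
  ∀ (n m : ℕ) (a b : ℕ → R),
    (∑ i ∈ Finset.range (n + 1), ι (a i) * X ^ i) *
        (∑ j ∈ Finset.range (m + 1), ι (b j) * X ^ j) = 0 →
      ∀ i ≤ n, ∀ j ≤ m, (ι (a i) * X ^ i) * (ι (b j) * X ^ j) = 0

/-- Condition (C_σ): `a·σ(b) = 0` implies `a·b = 0`. -/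
def CondC {R : Type*} [Ring R] (σ : R →+* R) : Prop :=
  ∀ a b : R, a * σ b = 0 → a * b = 0

/-- Key step: ab = 0 implies σ(a)b = 0 and δ(a)b = 0. -/
theorem key_step {R S : Type*} [Ring R] [Ring S] (σ : R →+* R) (δ : R →+ R)
    (ι : R →+* S) (X : S)
    (hOre : IsOreExtension σ δ ι X) (hArm : SkewArmendarizSD ι X) (hC : CondC σ)
    (a b : R) (hab : a * b = 0) : σ a * b = 0 ∧ δ a * b = 0 := by
  -- ι is injective
  have hinj : ∀ r : R, ι r = 0 → r = 0 := by
    intro r hr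
    have := hOre.indep 0 (fun _ => r) (by simpa using hr) 0 le_rfl
    exact this
  -- p = ι(δ a) + ι(σ a) * X, with coefficients c
  set c : ℕ → R := fun i => if i = 0 then δ a else σ a with hc
  set d : ℕ → R := fun _ => b with hd
  have hsum : (∑ i ∈ Finset.range 2, ι (c i) * X ^ i) = X * ι a := by
    rw [hOre.commute a]
    simp [Finset.sum_range_succ, hc]
    exact add_comm _ _
  have hprod : (∑ i ∈ Finset.range (1 + 1), ι (c i) * X ^ i) *
      (∑ j ∈ Finset.range (0 + 1), ι (d j) * X ^ j) = 0 := by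
    have : (∑ j ∈ Finset.range (0 + 1), ι (d j) * X ^ j) = ι b := by simp [hd]
    rw [this]
    show (∑ i ∈ Finset.range 2, ι (c i) * X ^ i) * ι b = 0
    rw [hsum, mul_assoc, ← map_mul, hab, map_zero, mul_zero]
  have harm := hArm 1 0 c d hprod
  constructor
  · -- from i = 1, j = 0:  ι(σ a) * X * ι b = 0
    have h1 := harm 1 le_rfl 0 le_rfl
    simp only [hc, hd, pow_one, pow_zero, mul_one, if_neg (one_ne_zero)] at h1
    -- expand X * ι b
    rw [mul_assoc, hOre.commute b, mul_add, ← mul_assoc, ← map_mul, ← map_mul] at h1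
    -- h1 : ι(σ a * σ b) * X + ι(σ a * δ b) = 0
    have hz : (∑ i ∈ Finset.range (1 + 1),
        ι ((fun i => if i = 0 then σ a * δ b else σ a * σ b) i) * X ^ i) = 0 := by
      simp [Finset.sum_range_succ]
      rw [add_comm]
      simpa using h1
    have := hOre.indep 1 _ hz 1 le_rfl
    simp only [if_neg one_ne_zero] at this
    exact hC _ _ this
  · -- from i = 0, j = 0: ι(δ a) * ι b = 0
    have h0 := harm 0 (by norm_num) 0 le_rfl
    simp only [hc, hd, pow_zero, mul_one, if_pos rfl] at h0
    rw [← map_mul] at h0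
    exact hinj _ h0

/-- If R is (σ,δ)-skew Armendariz and satisfies (C_σ), then ab = 0 implies
σⁿ(a)b = 0 and δⁿ(a)b = 0 for all n ≥ 1. -/
theorem stmt0 {R S : Type*} [Ring R] [Ring S] (σ : R →+* R) (δ : R →+ R)
    (hδ : IsSigmaDerivation σ δ) (ι : R →+* S) (X : S)
    (hOre : IsOreExtension σ δ ι X) (hArm : SkewArmendarizSD ι X) (hC : CondC σ) :
    ∀ a b : R, a * b = 0 → ∀ n : ℕ, 1 ≤ n →
      (⇑σ)^[n] a * b = 0 ∧ (⇑δ)^[n] a * b = 0 := by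
  intro a b hab n hn
  induction n with
  | zero => exact absurd hn (by norm_num)
  | succ k ih =>
    rcases Nat.eq_or_lt_of_le hn with h1 | hlt
    · -- k = 0
      have hk : k = 0 := by omega
      subst hk
      simpa using key_step σ δ ι X hOre hArm hC a b hab
    · have hk : 1 ≤ k := by omega
      obtain ⟨hs, hd2⟩ := ih hk
      constructor
      · rw [Function.iterate_succ_apply']
        exact (key_step σ δ ι X hOre hArm hC _ b hs).1
      · rw [Function.iterate_succ_apply']
        exact (key_step σ δ ι X hOre hArm hC _ b hd2).2
end

section
/- Let R be a (σ,δ)-skew Armendariz reversible ring satisfying condition (C_σ). If ab = 0 for a,b ∈ R, then a·f(b) = 0 for every map f that is a composition of powers of σ and δ (i.e., every word in σ and δ applied to b). -/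
open Finset

/-- Application of a word in σ (letter ) and δ (letter ) to an element. -/
def applyWord {R : Type*} [Ring R] (σ : R →+* R) (δ : R →+ R) : List Bool → R → R
  | [], a => a
  | b :: w, a => (if b then ⇑σ else ⇑δ) (applyWord σ δ w a)

/-- If R is (σ,δ)-skew Armendariz, reversible and satisfies (C_σ), then ab = 0 implies
a·f(b) = 0 for every word f in σ and δ. -/
theorem stmt1 {R S : Type*} [Ring R] [Ring S] (σ : R →+* R) (δ : R →+ R)
    (hδ : IsSigmaDerivation σ δ) (ι : R →+* S) (X : S)
    (hOre : IsOreExtension σ δ ι X) (hArm : SkewArmendarizSD ι X) (hC : CondC σ)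
    (hrev : ∀ a b : R, a * b = 0 → b * a = 0) :
    ∀ a b : R, a * b = 0 → ∀ w : List Bool, a * applyWord σ δ w b = 0 := by
  have hι0 : ∀ r : R, ι r = 0 → r = 0 := by
    intro r hr
    exact hOre.indep 0 (fun _ => r) (by simpa using hr) 0 le_rfl
  have key : ∀ a b : R, a * b = 0 → a * σ b = 0 ∧ a * δ b = 0 := by
    intro a b hab
    constructor
    · have h1 : σ a * σ b = 0 := by rw [← map_mul, hab, map_zero]
      exact hrev _ _ (hC _ _ (hrev _ _ h1))
    · have hba : b * a = 0 := hrev _ _ hab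
      set c : ℕ → R := fun i => if i = 0 then δ b else σ b with hc
      have hsum : (∑ i ∈ Finset.range 2, ι (c i) * X ^ i) = X * ι b := by
        rw [hOre.commute]
        simp [Finset.sum_range_succ, hc]
        abel
      have hprod : (∑ i ∈ Finset.range 2, ι (c i) * X ^ i) *
          (∑ j ∈ Finset.range 1, ι ((fun _ => a) j) * X ^ j) = 0 := by
        rw [hsum]
        simp [mul_assoc, ← map_mul, hba]
      have h := hArm 1 0 c (fun _ => a) hprod 0 (by norm_num) 0 le_rfl
      simp [hc] at h
      have hδba : δ b * a = 0 := hι0 _ (by rw [map_mul]; simpa using h)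
      exact hrev _ _ hδba
  intro a b hab w
  induction w with
  | nil => simpa [applyWord] using hab
  | cons hd tl ih =>
    cases hd
    · simpa [applyWord] using (key a _ ih).2
    · simpa [applyWord] using (key a _ ih).1
end

section
/- Let R be a (σ,δ)-skew Armendariz ring satisfying condition (C_σ). If f = Σᵢ aᵢxⁱ and g = Σⱼ bⱼxʲ in R[x;σ,δ] satisfy fg = 0, then aᵢbⱼ = 0 for all i,j. -/
open Finset

theorem aux_pow_comm {R S : Type*} [Ring R] [Ring S] (σ : R →+* R) (δ : R →+ R)
    (ι : R →+* S) (X : S)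
    (hcomm : ∀ a : R, X * ι a = ι (σ a) * X + ι (δ a)) :
    ∀ (i : ℕ) (b : R), ∃ c : ℕ → R,
      (X ^ i * ι b = ∑ k ∈ Finset.range (i + 1), ι (c k) * X ^ k) ∧
      c i = (σ ^ i) b ∧ ∀ k > i, c k = 0 := by
  intro i
  induction i with
  | zero =>
    intro b
    refine ⟨fun k => if k = 0 then b else 0, by simp, by simp, ?_⟩
    intro k hk
    have : k ≠ 0 := by omega
    simp [this]
  | succ i ih =>
    intro b
    obtain ⟨c, hc, hci, hc0⟩ := ih b
    refine ⟨fun k => δ (c k) + (if k = 0 then 0 else σ (c (k - 1))), ?_, ?_, ?_⟩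
    · rw [pow_succ', mul_assoc, hc, Finset.mul_sum]
      have step : ∀ k, X * (ι (c k) * X ^ k)
          = ι (σ (c k)) * X ^ (k + 1) + ι (δ (c k)) * X ^ k := by
        intro k
        rw [← mul_assoc, hcomm (c k), add_mul, pow_succ', ← mul_assoc]
      simp only [step]
      rw [Finset.sum_add_distrib]
      have h1 : ∑ k ∈ Finset.range (i + 1), ι (σ (c k)) * X ^ (k + 1)
          = ∑ k ∈ Finset.range (i + 1 + 1),
              ι (if k = 0 then (0:R) else σ (c (k - 1))) * X ^ k := by
        rw [Finset.sum_range_succ'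
          (fun k => ι (if k = 0 then (0:R) else σ (c (k - 1))) * X ^ k)]
        simp
      have h2 : ∑ k ∈ Finset.range (i + 1 + 1), ι (δ (c k)) * X ^ k
          = ∑ k ∈ Finset.range (i + 1), ι (δ (c k)) * X ^ k := by
        rw [Finset.sum_range_succ, hc0 (i + 1) (by omega), map_zero, map_zero,
          zero_mul, add_zero]
      rw [h1, ← h2, ← Finset.sum_add_distrib]
      congr 1
      funext k
      rw [map_add, add_mul, add_comm]
    · simp only [Nat.succ_ne_zero, if_false, Nat.add_sub_cancel,
        hc0 (i + 1) (by omega), map_zero, zero_add, hci, pow_succ']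
      rfl
    · intro k hk
      have h0 : k ≠ 0 := by omega
      simp only [h0, if_false]
      rw [hc0 k (by omega), hc0 (k - 1) (by omega), map_zero, map_zero, add_zero]


theorem aux_condC_pow {R : Type*} [Ring R] (σ : R →+* R)
    (hC : ∀ a b : R, a * σ b = 0 → a * b = 0) :
    ∀ (i : ℕ) (a b : R), a * (σ ^ i) b = 0 → a * b = 0 := by
  intro i
  induction i with
  | zero => intro a b h; simpa using h
  | succ i ih =>
    intro a b h
    have key : (σ ^ (i + 1)) b = (σ ^ i) (σ b) := by rw [pow_succ]; rfl
    rw [key] at h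
    exact hC a b (ih a (σ b) h)


theorem aux_main {R S : Type*} [Ring R] [Ring S] (σ : R →+* R) (δ : R →+ R)
    (ι : R →+* S) (X : S)
    (hcomm : ∀ a : R, X * ι a = ι (σ a) * X + ι (δ a))
    (indep : ∀ (n : ℕ) (c : ℕ → R),
      (∑ i ∈ Finset.range (n + 1), ι (c i) * X ^ i) = 0 → ∀ i ≤ n, c i = 0)
    (hC : ∀ a b : R, a * σ b = 0 → a * b = 0)
    (i j : ℕ) (a b : R)
    (h : (ι a * X ^ i) * (ι b * X ^ j) = 0) : a * b = 0 := by
  obtain ⟨c, hc, hci, hc0⟩ := aux_pow_comm σ δ ι X hcomm i b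
  set e : ℕ → R := fun l => if j ≤ l then a * c (l - j) else 0 with he
  have hsum : ∑ l ∈ Finset.range (i + j + 1), ι (e l) * X ^ l = 0 := by
    rw [← h]
    have hrw : (ι a * X ^ i) * (ι b * X ^ j) = ∑ k ∈ Finset.range (i + 1),
        ι (a * c k) * X ^ (k + j) := by
      rw [mul_assoc, ← mul_assoc (X ^ i), hc, Finset.sum_mul, Finset.mul_sum]
      congr 1; funext k
      simp only [map_mul, pow_add, mul_assoc]
    rw [hrw]
    rw [show i + j + 1 = j + (i + 1) by omega, Finset.sum_range_add]
    have hz : ∑ l ∈ Finset.range j, ι (e l) * X ^ l = 0 := by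
      apply Finset.sum_eq_zero
      intro l hl
      have : ¬ j ≤ l := by simp at hl; omega
      simp [he, this]
    rw [hz, zero_add]
    apply Finset.sum_congr rfl
    intro k _
    have h1 : j ≤ j + k := by omega
    have h2 : j + k - j = k := by omega
    simp only [he, h1, if_true, h2]
    ring_nf
  have := indep (i + j) e hsum (i + j) (le_refl _)
  have h3 : e (i + j) = a * c i := by
    simp [he, show j ≤ i + j by omega, show i + j - j = i by omega]
  rw [h3, hci] at this
  exact aux_condC_pow σ hC i a b this


/-- If R is (σ,δ)-skew Armendariz and satisfies (C_σ), then fg = 0 in R[x;σ,δ]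
implies aᵢbⱼ = 0 for all coefficients. -/
theorem stmt2 {R S : Type*} [Ring R] [Ring S] (σ : R →+* R) (δ : R →+ R)
    (hδ : IsSigmaDerivation σ δ) (ι : R →+* S) (X : S)
    (hOre : IsOreExtension σ δ ι X) (hArm : SkewArmendarizSD ι X) (hC : CondC σ) :
    ∀ (n m : ℕ) (a b : ℕ → R),
      (∑ i ∈ Finset.range (n + 1), ι (a i) * X ^ i) *
          (∑ j ∈ Finset.range (m + 1), ι (b j) * X ^ j) = 0 →
        ∀ i ≤ n, ∀ j ≤ m, a i * b j = 0 := by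
  intro n m a b hfg i hi j hj
  have h := hArm n m a b hfg i hi j hj
  exact aux_main σ δ ι X hOre.commute hOre.indep hC i j (a i) (b j) h
end

section
/- Let R be a skew Armendariz ring such that R[x;σ,δ] is symmetric. If f = Σᵢ aᵢxⁱ and g = Σⱼ bⱼxʲ in R[x;σ,δ] satisfy fg = 0, then aᵢbⱼ = 0 for all i,j. -/
open Finset

/-- Right multiplication by X is injective at 0. -/
lemma eq_zero_of_mul_X_eq_zero {R S : Type*} [Ring R] [Ring S] {σ : R →+* R} {δ : R →+ R}
    {ι : R →+* S} {X : S} (hOre : IsOreExtension σ δ ι X) {s : S} (h : s * X = 0) : s = 0 := by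
  obtain ⟨N, c, rfl⟩ := hOre.span s
  have key : (∑ i ∈ Finset.range (N + 1 + 1),
      ι ((fun i => if i = 0 then 0 else c (i - 1)) i) * X ^ i) = 0 := by
    rw [Finset.sum_range_succ', ← h, Finset.sum_mul]
    simp [pow_succ, mul_assoc]
  have hc := hOre.indep (N + 1) _ key
  apply Finset.sum_eq_zero
  intro i hi
  have : c i = 0 := by
    have := hc (i + 1) (by have := Finset.mem_range.mp hi; omega)
    simpa using this
  simp [this]

/-- If R is skew Armendariz (fg = 0 implies a₀bⱼ = 0) and R[x;σ,δ] is symmetric,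
then fg = 0 implies aᵢbⱼ = 0 for all i, j. -/
theorem stmt3 {R S : Type*} [Ring R] [Ring S] (σ : R →+* R) (δ : R →+ R)
    (hδ : IsSigmaDerivation σ δ) (ι : R →+* S) (X : S)
    (hOre : IsOreExtension σ δ ι X)
    (hSkArm : ∀ (n m : ℕ) (a b : ℕ → R),
      (∑ i ∈ Finset.range (n + 1), ι (a i) * X ^ i) *
          (∑ j ∈ Finset.range (m + 1), ι (b j) * X ^ j) = 0 →
        ∀ j ≤ m, a 0 * b j = 0)
    (hsym : ∀ p q r : S, p * q * r = 0 → p * r * q = 0) :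
    ∀ (n m : ℕ) (a b : ℕ → R),
      (∑ i ∈ Finset.range (n + 1), ι (a i) * X ^ i) *
          (∑ j ∈ Finset.range (m + 1), ι (b j) * X ^ j) = 0 →
        ∀ i ≤ n, ∀ j ≤ m, a i * b j = 0 := by
  intro n
  induction n with
  | zero =>
    intro m a b h i hi j hj
    obtain rfl : i = 0 := Nat.le_zero.mp hi
    exact hSkArm 0 m a b h j hj
  | succ k ih =>
    intro m a b h i hi j hj
    have h0 : ∀ j ≤ m, a 0 * b j = 0 := hSkArm _ _ _ _ h
    set g := ∑ j ∈ Finset.range (m + 1), ι (b j) * X ^ j with hg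
    have hag : ι (a 0) * g = 0 := by
      rw [hg, Finset.mul_sum]
      apply Finset.sum_eq_zero
      intro j' hj'
      rw [← mul_assoc, ← map_mul, h0 j' (Nat.lt_succ_iff.mp (Finset.mem_range.mp hj')),
        map_zero, zero_mul]
    set f' := ∑ i ∈ Finset.range (k + 1), ι (a (i + 1)) * X ^ i with hf'
    have hsplit : (∑ i ∈ Finset.range (k + 1 + 1), ι (a i) * X ^ i) = f' * X + ι (a 0) := by
      rw [Finset.sum_range_succ', hf', Finset.sum_mul]
      simp [pow_succ, mul_assoc]
    rw [hsplit, add_mul, hag, add_zero] at h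
    have hfg : f' * g = 0 :=
      eq_zero_of_mul_X_eq_zero hOre (hsym f' X g h)
    cases i with
    | zero => exact h0 j hj
    | succ i' =>
      exact ih m (fun t => a (t + 1)) b hfg i' (Nat.succ_le_succ_iff.mp hi) j hj
end

section
/- Let R be a (σ,δ)-skew Armendariz ring satisfying condition (C_σ). If f, g, h ∈ R[x;σ,δ] with coefficients aᵢ, bⱼ, cₖ respectively satisfy fgh = 0, then aᵢbⱼcₖ = 0 for all i,j,k. -/
open Finset

/-- Expansion of `X^i * ι b` as a polynomial with top coefficient `σ^[i] b`. -/
lemma aux_expand {R S : Type*} [Ring R] [Ring S] {σ : R →+* R} {δ : R →+ R}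
    {ι : R →+* S} {X : S} (hOre : IsOreExtension σ δ ι X) (i : ℕ) (b : R) :
    ∃ c : ℕ → R, c i = (σ : R → R)^[i] b ∧
      X ^ i * ι b = ∑ t ∈ Finset.range (i + 1), ι (c t) * X ^ t := by
  induction i with
  | zero => exact ⟨fun _ => b, rfl, by simp⟩
  | succ i ih =>
    obtain ⟨c, hc, hX⟩ := ih
    refine ⟨fun t => (if t ≤ i then δ (c t) else 0) + (if t = 0 then 0 else σ (c (t - 1))),
      ?_, ?_⟩
    · simp [Function.iterate_succ_apply', hc]
    · have h0 : X ^ (i + 1) * ι b = X * (X ^ i * ι b) := by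
        rw [pow_succ', mul_assoc]
      rw [h0, hX, Finset.mul_sum]
      have h1 : ∀ t : ℕ, X * (ι (c t) * X ^ t)
          = ι (δ (c t)) * X ^ t + ι (σ (c t)) * X ^ (t + 1) := by
        intro t
        rw [← mul_assoc, hOre.commute, add_mul, mul_assoc, ← pow_succ']
        exact add_comm _ _
      simp only [h1]
      rw [Finset.sum_add_distrib]
      have h2 : ∑ t ∈ Finset.range (i + 1 + 1),
          ι ((if t ≤ i then δ (c t) else 0) + (if t = 0 then 0 else σ (c (t - 1)))) * X ^ t
          = ∑ t ∈ Finset.range (i + 2), ι (if t ≤ i then δ (c t) else 0) * X ^ t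
            + ∑ t ∈ Finset.range (i + 2), ι (if t = 0 then 0 else σ (c (t - 1))) * X ^ t := by
        rw [← Finset.sum_add_distrib]
        exact Finset.sum_congr rfl fun t _ => by rw [map_add, add_mul]
      rw [h2]
      congr 1
      · symm
        rw [Finset.sum_range_succ, if_neg (by omega : ¬ (i + 1 ≤ i)), map_zero,
          zero_mul, add_zero]
        exact Finset.sum_congr rfl fun t ht =>
          by rw [if_pos (Nat.lt_succ_iff.mp (Finset.mem_range.mp ht))]
      · symm
        rw [Finset.sum_range_succ' (fun t => ι (if t = 0 then 0 else σ (c (t - 1))) * X ^ t) (i+1)]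
        simp

/-- Iterating condition (C_σ). -/
lemma aux_citer {R : Type*} [Ring R] {σ : R →+* R} (hC : CondC σ) (i : ℕ) (a b : R)
    (h : a * (σ : R → R)^[i] b = 0) : a * b = 0 := by
  induction i generalizing b with
  | zero => exact h
  | succ i ih =>
    rw [Function.iterate_succ_apply] at h
    exact hC a b (ih (σ b) h)

/-- From `(ι a * X^i) * (ι b * X^j) = 0` deduce `a * b = 0`. -/
lemma aux_monomial {R S : Type*} [Ring R] [Ring S] {σ : R →+* R} {δ : R →+ R}
    {ι : R →+* S} {X : S} (hOre : IsOreExtension σ δ ι X) (hC : CondC σ)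
    (i j : ℕ) (a b : R) (h : (ι a * X ^ i) * (ι b * X ^ j) = 0) : a * b = 0 := by
  obtain ⟨c, hc, hX⟩ := aux_expand hOre i b
  have key : (ι a * X ^ i) * (ι b * X ^ j)
      = ∑ t ∈ Finset.range (i + 1), ι (a * c t) * X ^ (t + j) := by
    have : (ι a * X ^ i) * (ι b * X ^ j) = ι a * (X ^ i * ι b) * X ^ j := by
      rw [mul_assoc, mul_assoc, mul_assoc, ← mul_assoc (X ^ i)]
    rw [this, hX, Finset.mul_sum, Finset.sum_mul]
    exact Finset.sum_congr rfl fun t _ => by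
      rw [map_mul, ← mul_assoc, mul_assoc, pow_add]
  set d : ℕ → R := fun s => if j ≤ s then a * c (s - j) else 0 with hd
  have hsum : ∑ s ∈ Finset.range (i + j + 1), ι (d s) * X ^ s = 0 := by
    have hr : i + j + 1 = j + (i + 1) := by omega
    rw [hr, Finset.sum_range_add]
    have e1 : ∑ s ∈ Finset.range j, ι (d s) * X ^ s = 0 := by
      refine Finset.sum_eq_zero fun s hs => ?_
      rw [hd]
      simp only [if_neg (Nat.not_le.mpr (Finset.mem_range.mp hs)), map_zero, zero_mul]
    have e2 : ∑ t ∈ Finset.range (i + 1), ι (d (j + t)) * X ^ (j + t)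
        = ∑ t ∈ Finset.range (i + 1), ι (a * c t) * X ^ (t + j) := by
      refine Finset.sum_congr rfl fun t _ => ?_
      have hdt : d (j + t) = a * c t := by rw [hd]; simp
      rw [hdt, Nat.add_comm j t]
    rw [e1, e2, zero_add, ← key, h]
  have hdz := hOre.indep (i + j) d hsum (i + j) le_rfl
  have : a * c i = 0 := by
    rw [hd] at hdz
    simpa [Nat.add_sub_cancel] using hdz
  exact aux_citer hC i a b (by rw [← hc]; exact this)

/-- Two-factor version: `fg = 0` implies `aᵢ bⱼ = 0`. -/
lemma aux_two {R S : Type*} [Ring R] [Ring S] {σ : R →+* R} {δ : R →+ R}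
    {ι : R →+* S} {X : S} (hOre : IsOreExtension σ δ ι X)
    (hArm : SkewArmendarizSD ι X) (hC : CondC σ)
    (n m : ℕ) (a b : ℕ → R)
    (h : (∑ i ∈ Finset.range (n + 1), ι (a i) * X ^ i) *
        (∑ j ∈ Finset.range (m + 1), ι (b j) * X ^ j) = 0) :
    ∀ i ≤ n, ∀ j ≤ m, a i * b j = 0 := fun i hi j hj =>
  aux_monomial hOre hC i j (a i) (b j) (hArm n m a b h i hi j hj)

/-- If R is (σ,δ)-skew Armendariz and satisfies (C_σ), then fgh = 0 in R[x;σ,δ]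
implies aᵢbⱼcₖ = 0 for all coefficients. -/
theorem stmt4 {R S : Type*} [Ring R] [Ring S] (σ : R →+* R) (δ : R →+ R)
    (hδ : IsSigmaDerivation σ δ) (ι : R →+* S) (X : S)
    (hOre : IsOreExtension σ δ ι X) (hArm : SkewArmendarizSD ι X) (hC : CondC σ) :
    ∀ (n m p : ℕ) (a b c : ℕ → R),
      (∑ i ∈ Finset.range (n + 1), ι (a i) * X ^ i) *
          (∑ j ∈ Finset.range (m + 1), ι (b j) * X ^ j) *
          (∑ k ∈ Finset.range (p + 1), ι (c k) * X ^ k) = 0 →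
        ∀ i ≤ n, ∀ j ≤ m, ∀ k ≤ p, a i * b j * c k = 0 := by
  intro n m p a b c h i hi j hj k hk
  set f := ∑ i ∈ Finset.range (n + 1), ι (a i) * X ^ i with hf
  set g := ∑ j ∈ Finset.range (m + 1), ι (b j) * X ^ j with hg
  set hpoly := ∑ k ∈ Finset.range (p + 1), ι (c k) * X ^ k with hh
  -- write g * hpoly in standard form
  obtain ⟨q, d, hd⟩ := hOre.span (g * hpoly)
  have hfgh : f * (g * hpoly) = 0 := by rw [← mul_assoc]; exact h
  have had : ∀ i' ≤ n, ∀ l ≤ q, a i' * d l = 0 :=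
    aux_two hOre hArm hC n q a d (by rw [← hd]; exact hfgh)
  -- hence ι (a i) * (g * hpoly) = 0
  have hzero : (ι (a i) * g) * hpoly = 0 := by
    rw [mul_assoc, hd, Finset.mul_sum]
    refine Finset.sum_eq_zero fun l hl => ?_
    rw [← mul_assoc, ← map_mul, had i hi l (Nat.lt_succ_iff.mp (Finset.mem_range.mp hl)),
      map_zero, zero_mul]
  -- ι (a i) * g is a polynomial with coefficients a i * b j
  have hig : ι (a i) * g = ∑ j' ∈ Finset.range (m + 1), ι (a i * b j') * X ^ j' := by
    rw [hg, Finset.mul_sum]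
    exact Finset.sum_congr rfl fun j' _ => by rw [← mul_assoc, map_mul]
  have := aux_two hOre hArm hC m p (fun j' => a i * b j') c
    (by rw [← hig]; exact hzero) j hj k hk
  exact this
end

section
/- Let R be a (σ,δ)-skew Armendariz ring satisfying condition (C_σ). Then R is reversible if and only if the Ore extension R[x;σ,δ] is reversible. -/
open Finset

section Aux

variable {R S : Type*} [Ring R] [Ring S]

/-- Coefficient functions for expanding `X^j * ι a`. -/
def Fc (σ : R →+* R) (δ : R →+ R) : ℕ → ℕ → R → R
  | 0, 0, a => a
  | 0, _+1, _ => 0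
  | j+1, 0, a => δ (Fc σ δ j 0 a)
  | j+1, k+1, a => σ (Fc σ δ j k a) + δ (Fc σ δ j (k+1) a)

lemma Fc_gt (σ : R →+* R) (δ : R →+ R) : ∀ j k, j < k → ∀ a, Fc σ δ j k a = 0 := by
  intro j
  induction j with
  | zero =>
    intro k hk a
    match k, hk with
    | k+1, _ => rfl
  | succ j ih =>
    intro k hk a
    match k, hk with
    | k+1, hk =>
      have h1 : j < k := Nat.lt_of_succ_lt_succ hk
      show σ (Fc σ δ j k a) + δ (Fc σ δ j (k+1) a) = 0
      rw [ih k h1, ih (k+1) (Nat.lt_succ_of_lt h1), map_zero, map_zero, add_zero]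

lemma expand (σ : R →+* R) (δ : R →+ R) (ι : R →+* S) (X : S)
    (hcomm : ∀ a : R, X * ι a = ι (σ a) * X + ι (δ a)) :
    ∀ (j : ℕ) (a : R), X ^ j * ι a = ∑ k ∈ range (j+1), ι (Fc σ δ j k a) * X ^ k := by
  intro j
  induction j with
  | zero => intro a; simp [Fc]
  | succ j ih =>
    intro a
    have h1 : X ^ (j+1) * ι a = X * (X ^ j * ι a) := by
      rw [pow_succ']; rw [mul_assoc]
    rw [h1, ih, Finset.mul_sum]
    have h2 : ∀ k ∈ range (j+1), X * (ι (Fc σ δ j k a) * X ^ k)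
        = ι (σ (Fc σ δ j k a)) * X ^ (k+1) + ι (δ (Fc σ δ j k a)) * X ^ k := by
      intro k _
      rw [← mul_assoc, hcomm, add_mul, mul_assoc, ← pow_succ']
    rw [Finset.sum_congr rfl h2, Finset.sum_add_distrib]
    -- RHS: split off the k = 0 term
    rw [Finset.sum_range_succ' (fun k => ι (Fc σ δ (j+1) k a) * X ^ k) (j+1)]
    have h3 : ∀ k ∈ range (j+1), ι (Fc σ δ (j+1) (k+1) a) * X ^ (k+1)
        = ι (σ (Fc σ δ j k a)) * X ^ (k+1) + ι (δ (Fc σ δ j (k+1) a)) * X ^ (k+1) := by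
      intro k _
      show ι (σ (Fc σ δ j k a) + δ (Fc σ δ j (k+1) a)) * X ^ (k+1) = _
      rw [map_add, add_mul]
    rw [Finset.sum_congr rfl h3, Finset.sum_add_distrib]
    have h4 : (∑ k ∈ range (j+1), ι (δ (Fc σ δ j k a)) * X ^ k)
        = (∑ k ∈ range (j+1), ι (δ (Fc σ δ j (k+1) a)) * X ^ (k+1))
          + ι (Fc σ δ (j+1) 0 a) * X ^ 0 := by
      rw [Finset.sum_range_succ' (fun k => ι (δ (Fc σ δ j k a)) * X ^ k) j]
      rw [Finset.sum_range_succ (fun k => ι (δ (Fc σ δ j (k+1) a)) * X ^ (k+1)) j]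
      rw [Fc_gt σ δ j (j+1) (Nat.lt_succ_self j), map_zero, map_zero, zero_mul, add_zero]
      rfl
    rw [h4, add_assoc]

lemma mono_mul (σ : R →+* R) (δ : R →+ R) (ι : R →+* S) (X : S)
    (hcomm : ∀ a : R, X * ι a = ι (σ a) * X + ι (δ a)) (i j : ℕ) (a b : R) :
    (ι a * X ^ i) * (ι b * X ^ j)
      = ∑ k ∈ range (i+1), ι (a * Fc σ δ i k b) * X ^ (k+j) := by
  have h1 : (ι a * X ^ i) * (ι b * X ^ j) = ι a * (X ^ i * ι b) * X ^ j := by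
    rw [mul_assoc, mul_assoc, mul_assoc]
  rw [h1, expand σ δ ι X hcomm, Finset.mul_sum, Finset.sum_mul]
  refine Finset.sum_congr rfl fun k _ => ?_
  rw [map_mul, pow_add, mul_assoc, mul_assoc, mul_assoc]

/-- From a zero monomial product, extract that every coefficient vanishes. -/
lemma coeffs_zero (σ : R →+* R) (δ : R →+ R) (ι : R →+* S) (X : S)
    (hindep : ∀ (n : ℕ) (c : ℕ → R),
      (∑ i ∈ Finset.range (n + 1), ι (c i) * X ^ i) = 0 → ∀ i ≤ n, c i = 0)
    (i j : ℕ) (c : ℕ → R)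
    (h : (∑ k ∈ range (i+1), ι (c k) * X ^ (k+j)) = 0) : ∀ k ≤ i, c k = 0 := by
  set d : ℕ → R := fun t => if j ≤ t then c (t - j) else 0 with hd
  have hsum : (∑ t ∈ range (j + i + 1), ι (d t) * X ^ t)
      = ∑ k ∈ range (i+1), ι (c k) * X ^ (k+j) := by
    have : j + i + 1 = j + (i + 1) := by omega
    rw [this, Finset.sum_range_add (fun t => ι (d t) * X ^ t) j (i+1)]
    have h0 : (∑ t ∈ range j, ι (d t) * X ^ t) = 0 := by
      refine Finset.sum_eq_zero fun t ht => ?_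
      have : ¬ j ≤ t := by simpa using Finset.mem_range.mp ht
      simp [hd, this]
    rw [h0, zero_add]
    refine Finset.sum_congr rfl fun k _ => ?_
    have h1 : d (j + k) = c k := by simp [hd]
    rw [h1, Nat.add_comm j k]
  intro k hk
  have := hindep (j + i) d (by rw [hsum]; exact h) (j + k) (by omega)
  simpa [hd] using this


/-- `a * σ^i b = 0` implies `a * b = 0` under condition C. -/
lemma chainC (σ : R →+* R) (δ : R →+ R) (hC : ∀ a b : R, a * σ b = 0 → a * b = 0) :
    ∀ (i : ℕ) (a b : R), a * Fc σ δ i i b = 0 → a * b = 0 := by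
  intro i
  induction i with
  | zero => intro a b h; exact h
  | succ i ih =>
    intro a b h
    have h1 : Fc σ δ (i+1) (i+1) b = σ (Fc σ δ i i b) := by
      show σ (Fc σ δ i i b) + δ (Fc σ δ i (i+1) b) = _
      rw [Fc_gt σ δ i (i+1) (Nat.lt_succ_self i), map_zero, add_zero]
    rw [h1] at h
    exact ih a b (hC a _ h)

lemma fcClosure (σ : R →+* R) (δ : R →+ R)
    (hσ : ∀ b c : R, b * c = 0 → b * σ c = 0)
    (hδ : ∀ b c : R, b * c = 0 → b * δ c = 0) :
    ∀ (j k : ℕ) (b a : R), b * a = 0 → b * Fc σ δ j k a = 0 := by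
  intro j
  induction j with
  | zero =>
    intro k b a h
    match k with
    | 0 => exact h
    | k+1 => show b * 0 = 0; rw [mul_zero]
  | succ j ih =>
    intro k b a h
    match k with
    | 0 => exact hδ b _ (ih 0 b a h)
    | k+1 =>
      show b * (σ (Fc σ δ j k a) + δ (Fc σ δ j (k+1) a)) = 0
      rw [mul_add, hσ b _ (ih k b a h), hδ b _ (ih (k+1) b a h), add_zero]

end Aux

/-- If R is (σ,δ)-skew Armendariz and satisfies (C_σ), then R is reversible iff
R[x;σ,δ] is reversible. -/
theorem stmt5 {R S : Type*} [Ring R] [Ring S] (σ : R →+* R) (δ : R →+ R)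
    (hδ : IsSigmaDerivation σ δ) (ι : R →+* S) (X : S)
    (hOre : IsOreExtension σ δ ι X) (hArm : SkewArmendarizSD ι X) (hC : CondC σ) :
    (∀ a b : R, a * b = 0 → b * a = 0) ↔ (∀ p q : S, p * q = 0 → q * p = 0) := by
  have ιinj : ∀ r : R, ι r = 0 → r = 0 := by
    intro r hr
    refine hOre.indep 0 (fun _ => r) ?_ 0 le_rfl
    simp [hr]
  constructor
  · intro hR p q hpq
    -- Lemma A (δ part): u * v = 0 → δ u * v = 0
    have lemA : ∀ u v : R, u * v = 0 → δ u * v = 0 := by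
      intro u v h
      have key : (∑ k ∈ range (1 + 1), ι ((fun k => if k = 0 then δ u else σ u) k) * X ^ k) *
          (∑ k ∈ range (0 + 1), ι ((fun _ => v) k) * X ^ k) = 0 := by
        have h1 : (∑ k ∈ range (1 + 1), ι ((fun k => if k = 0 then δ u else σ u) k) * X ^ k)
            = X * ι u := by
          rw [hOre.commute u]
          simp [Finset.sum_range_succ, add_comm]
        have h2 : (∑ k ∈ range (0 + 1), ι ((fun _ => v) k) * X ^ k) = ι v := by simp
        rw [h1, h2, mul_assoc, ← map_mul, h, map_zero, mul_zero]
      have := hArm 1 0 _ _ key 0 (by omega) 0 le_rfl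
      simp at this
      rw [← map_mul] at this
      exact ιinj _ this
    have hσcl : ∀ b c : R, b * c = 0 → b * σ c = 0 := by
      intro b c h
      have h1 : σ c * σ b = 0 := by rw [← map_mul, hR b c h, map_zero]
      exact hR _ _ (hC (σ c) b h1)
    have hδcl : ∀ b c : R, b * c = 0 → b * δ c = 0 := by
      intro b c h
      exact hR _ _ (lemA c b (hR b c h))
    obtain ⟨n, a, rfl⟩ := hOre.span p
    obtain ⟨m, b, rfl⟩ := hOre.span q
    have hmono := hArm n m a b hpq
    rw [Finset.sum_mul_sum]
    refine Finset.sum_eq_zero fun j hj => Finset.sum_eq_zero fun i hi => ?_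
    have hi' : i ≤ n := Nat.lt_succ_iff.mp (Finset.mem_range.mp hi)
    have hj' : j ≤ m := Nat.lt_succ_iff.mp (Finset.mem_range.mp hj)
    have h0 : (ι (a i) * X ^ i) * (ι (b j) * X ^ j) = 0 := hmono i hi' j hj'
    rw [mono_mul σ δ ι X hOre.commute] at h0
    have hcoef := coeffs_zero σ δ ι X hOre.indep i j _ h0 i le_rfl
    have hab : a i * b j = 0 := chainC σ δ hC i _ _ hcoef
    have hba : b j * a i = 0 := hR _ _ hab
    rw [mono_mul σ δ ι X hOre.commute]
    refine Finset.sum_eq_zero fun k _ => ?_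
    rw [fcClosure σ δ hσcl hδcl j k (b j) (a i) hba, map_zero, zero_mul]
  · intro hS a b h
    have h1 : ι b * ι a = 0 := hS (ι a) (ι b) (by rw [← map_mul, h, map_zero])
    exact ιinj _ (by rw [map_mul, h1])
end

section
/- Let R be a (σ,δ)-skew Armendariz ring satisfying condition (C_σ). Then R is symmetric if and only if the Ore extension R[x;σ,δ] is symmetric. -/
open Finset

namespace OreSym

variable {R S : Type*} [Ring R] [Ring S]

def co (σ : R →+* R) (δ : R →+ R) : ℕ → R → ℕ → R
  | 0, d, t => if t = 0 then d else 0
  | i+1, d, 0 => δ (co σ δ i d 0)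
  | i+1, d, t+1 => σ (co σ δ i d t) + δ (co σ δ i d (t+1))

lemma co_gt (σ : R →+* R) (δ : R →+ R) :
    ∀ (i : ℕ) (d : R) (t : ℕ), i < t → co σ δ i d t = 0 := by
  intro i
  induction i with
  | zero =>
    intro d t ht
    show (if t = 0 then d else 0) = 0
    rw [if_neg (by omega)]
  | succ i ih =>
    intro d t ht
    match t, ht with
    | t+1, ht =>
      show σ (co σ δ i d t) + δ (co σ δ i d (t+1)) = 0
      rw [ih d t (by omega), ih d (t+1) (by omega), map_zero, map_zero, add_zero]

variable (σ : R →+* R) (δ : R →+ R) (ι : R →+* S) (X : S)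

lemma iota_inj (hOre : IsOreExtension σ δ ι X) {e : R} (h : ι e = 0) : e = 0 :=
  hOre.indep 0 (fun _ => e) (by simpa using h) 0 le_rfl

lemma cx (hOre : IsOreExtension σ δ ι X) :
    ∀ (m N : ℕ) (cc : ℕ → R),
      (∑ t ∈ range (N+1), ι (cc t) * X^(t+m)) = 0 → ∀ t ≤ N, cc t = 0 := by
  intro m
  induction m with
  | zero =>
    intro N cc h t ht
    exact hOre.indep N cc (by simpa using h) t ht
  | succ m ih =>
    intro N cc h t ht
    have h' : (∑ s ∈ range (N+1+1),
        ι ((fun s => match s with | 0 => (0:R) | s+1 => cc s) s) * X^(s+m)) = 0 := by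
      rw [Finset.sum_range_succ' (fun s =>
        ι ((fun s => match s with | 0 => (0:R) | s+1 => cc s) s) * X^(s+m)) (N+1)]
      simp only [map_zero, zero_mul, add_zero]
      rw [← h]
      apply Finset.sum_congr rfl
      intro s _
      have : s + 1 + m = s + (m + 1) := by omega
      rw [this]
    have := ih (N+1) _ h' (t+1) (by omega)
    simpa using this

lemma co_expand (hOre : IsOreExtension σ δ ι X) :
    ∀ (i : ℕ) (d : R), X^i * ι d = ∑ t ∈ range (i+1), ι (co σ δ i d t) * X^t := by
  intro i
  induction i with
  | zero =>
    intro d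
    rw [Finset.sum_range_one]
    show X^0 * ι d = ι (if (0:ℕ) = 0 then d else 0) * X^0
    simp
  | succ i ih =>
    intro d
    have lhs : X^(i+1) * ι d
        = (∑ t ∈ range (i+1), ι (σ (co σ δ i d t)) * X^(t+1))
          + ∑ t ∈ range (i+1), ι (δ (co σ δ i d t)) * X^t := by
      rw [pow_succ', mul_assoc, ih d, Finset.mul_sum]
      rw [Finset.sum_congr rfl (fun t _ => by
        rw [← mul_assoc, hOre.commute, add_mul, mul_assoc, ← pow_succ'] : ∀ t ∈ range (i+1), X * (ι (co σ δ i d t) * X^t)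
          = ι (σ (co σ δ i d t)) * X^(t+1) + ι (δ (co σ δ i d t)) * X^t)]
      rw [Finset.sum_add_distrib]
    rw [lhs]
    rw [Finset.sum_range_succ' (fun t => ι (co σ δ (i+1) d t) * X^t) (i+1)]
    have e1 : ∀ s ∈ range (i+1), ι (co σ δ (i+1) d (s+1)) * X^(s+1)
        = ι (σ (co σ δ i d s)) * X^(s+1) + ι (δ (co σ δ i d (s+1))) * X^(s+1) := by
      intro s _
      rw [show co σ δ (i+1) d (s+1) = σ (co σ δ i d s) + δ (co σ δ i d (s+1)) from rfl,
        map_add, add_mul]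
    rw [Finset.sum_congr rfl e1, Finset.sum_add_distrib]
    have e2 : (∑ s ∈ range (i+1), ι (δ (co σ δ i d (s+1))) * X^(s+1))
        + ι (co σ δ (i+1) d 0) * X^0
        = ∑ t ∈ range (i+1), ι (δ (co σ δ i d t)) * X^t := by
      rw [show co σ δ (i+1) d 0 = δ (co σ δ i d 0) from rfl]
      have := Finset.sum_range_succ' (fun t => ι (δ (co σ δ i d t)) * X^t) (i+1)
      rw [Finset.sum_range_succ] at this
      rw [co_gt σ δ i d (i+1) (by omega), map_zero, map_zero, zero_mul, add_zero] at this
      exact this.symm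
    rw [add_assoc, e2]

lemma ctop (hC : CondC σ) : ∀ (i : ℕ) (a d : R), a * co σ δ i d i = 0 → a * d = 0 := by
  intro i
  induction i with
  | zero =>
    intro a d h
    simpa [show co σ δ 0 d 0 = d from rfl] using h
  | succ i ih =>
    intro a d h
    have h0 : co σ δ i d (i+1) = 0 := co_gt σ δ i d (i+1) (by omega)
    have h1 : a * σ (co σ δ i d i) = 0 := by
      rw [show co σ δ (i+1) d (i+1) = σ (co σ δ i d i) + δ (co σ δ i d (i+1)) from rfl,
        h0, map_zero, add_zero] at h
      exact h
    exact ih a d (hC _ _ h1)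

lemma extract (hOre : IsOreExtension σ δ ι X) (hC : CondC σ) {a d : R} {i m : ℕ}
    (h : (ι a * X^i) * (ι d * X^m) = 0) : a * d = 0 := by
  have h1 : (∑ t ∈ range (i+1), ι (a * co σ δ i d t) * X^(t+m)) = 0 := by
    rw [← h]
    calc ∑ t ∈ range (i+1), ι (a * co σ δ i d t) * X^(t+m)
        = ∑ t ∈ range (i+1), (ι a * (ι (co σ δ i d t) * X^t)) * X^m := by
          apply Finset.sum_congr rfl
          intro t _
          rw [map_mul, pow_add, ← mul_assoc, ← mul_assoc]
      _ = (ι a * ∑ t ∈ range (i+1), ι (co σ δ i d t) * X^t) * X^m := by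
          rw [Finset.mul_sum, Finset.sum_mul]
      _ = (ι a * (X^i * ι d)) * X^m := by rw [co_expand σ δ ι X hOre]
      _ = (ι a * X^i) * (ι d * X^m) := by
          rw [← mul_assoc, ← mul_assoc, mul_assoc (ι a * X^i) (ι d) (X^m)]
  have h2 := cx σ δ ι X hOre m i (fun t => a * co σ δ i d t) h1 i le_rfl
  exact ctop σ δ hC i a d h2


lemma rev (hSymm : ∀ a b c : R, a * b * c = 0 → a * c * b = 0) {a b : R}
    (h : a * b = 0) : b * a = 0 := by
  have := hSymm 1 a b (by simpa using h)
  simpa using this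

lemma clsig (hSymm : ∀ a b c : R, a * b * c = 0 → a * c * b = 0) (hC : CondC σ)
    {a b : R} (h : a * b = 0) : a * σ b = 0 := by
  have hba := rev hSymm h
  have h1 : σ b * σ a = 0 := by rw [← map_mul, hba, map_zero]
  exact rev hSymm (hC (σ b) a h1)

lemma cldel (hSymm : ∀ a b c : R, a * b * c = 0 → a * c * b = 0)
    (hOre : IsOreExtension σ δ ι X) (hArm : SkewArmendarizSD ι X)
    {a b : R} (h : a * b = 0) : a * δ b = 0 := by
  have hba := rev hSymm h
  have hf : (∑ t ∈ range (1+1), ι ((fun t => if t = 0 then δ b else σ b) t) * X^t)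
      = X * ι b := by
    rw [Finset.sum_range_succ, Finset.sum_range_one]
    rw [show ((fun t => if t = 0 then δ b else σ b) 0) = δ b from rfl,
      show ((fun t => if t = 0 then δ b else σ b) 1) = σ b from rfl,
      hOre.commute b, pow_zero, pow_one, mul_one, add_comm]
  have hprod : (∑ t ∈ range (1+1), ι ((fun t => if t = 0 then δ b else σ b) t) * X^t) *
      (∑ t ∈ range (0+1), ι ((fun _ => a) t) * X^t) = 0 := by
    rw [hf, Finset.sum_range_one, pow_zero, mul_one, mul_assoc, ← map_mul, hba,
      map_zero, mul_zero]
  have h2 := hArm 1 0 _ _ hprod 0 (by omega) 0 le_rfl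
  rw [show (if (0:ℕ) = 0 then δ b else σ b) = δ b from rfl, pow_zero, mul_one,
    mul_one, ← map_mul] at h2
  exact rev hSymm (iota_inj σ δ ι X hOre h2)

lemma wlem (hSymm : ∀ a b c : R, a * b * c = 0 → a * c * b = 0)
    (hOre : IsOreExtension σ δ ι X) (hArm : SkewArmendarizSD ι X) (hC : CondC σ) :
    ∀ (i : ℕ) (a b : R), a * b = 0 → (ι a * X^i) * ι b = 0 := by
  intro i
  induction i with
  | zero =>
    intro a b h
    rw [pow_zero, mul_one, ← map_mul, h, map_zero]
  | succ i ih =>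
    intro a b h
    have step : (ι a * X^(i+1)) * ι b = (ι a * X^i) * (X * ι b) := by
      rw [pow_succ, ← mul_assoc, mul_assoc (ι a * X^i) X (ι b)]
    rw [step, hOre.commute, mul_add, ← mul_assoc,
      ih a (σ b) (clsig σ hSymm hC h), zero_mul, zero_add,
      ih a (δ b) (cldel σ δ ι X hSymm hOre hArm h)]

lemma zlem (hSymm : ∀ a b c : R, a * b * c = 0 → a * c * b = 0)
    (hOre : IsOreExtension σ δ ι X) (hArm : SkewArmendarizSD ι X) (hC : CondC σ) :
    ∀ (i k : ℕ) (a c b : R), a * c * b = 0 →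
      ((ι a * X^i) * (ι c * X^k)) * ι b = 0 := by
  intro i
  induction i with
  | zero =>
    intro k a c b h
    rw [pow_zero, mul_one, ← mul_assoc, ← map_mul]
    exact wlem σ δ ι X hSymm hOre hArm hC k (a*c) b h
  | succ i ih =>
    intro k a c b h
    have habc : a * b * c = 0 := hSymm a c b h
    have h1 : a * σ c * b = 0 := hSymm a b (σ c) (clsig σ hSymm hC habc)
    have h2 : a * δ c * b = 0 := hSymm a b (δ c) (cldel σ δ ι X hSymm hOre hArm habc)
    have step : ((ι a * X^(i+1)) * (ι c * X^k)) * ι b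
        = ((ι a * X^i) * (ι (σ c) * X^(k+1))) * ι b
          + ((ι a * X^i) * (ι (δ c) * X^k)) * ι b := by
      rw [pow_succ, ← mul_assoc (ι a) (X^i) X,
        mul_assoc (ι a * X^i) X (ι c * X^k), ← mul_assoc X (ι c) (X^k),
        hOre.commute, add_mul, mul_assoc (ι (σ c)) X (X^k), ← pow_succ',
        mul_add, add_mul]
    rw [step, ih (k+1) a (σ c) b h1, ih k a (δ c) b h2, add_zero]

lemma zfull (hSymm : ∀ a b c : R, a * b * c = 0 → a * c * b = 0)
    (hOre : IsOreExtension σ δ ι X) (hArm : SkewArmendarizSD ι X) (hC : CondC σ)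
    (i k j : ℕ) (a c b : R) (h : a * c * b = 0) :
    ((ι a * X^i) * (ι c * X^k)) * (ι b * X^j) = 0 := by
  rw [← mul_assoc, zlem σ δ ι X hSymm hOre hArm hC i k a c b h, zero_mul]

end OreSym

/-- If R is (σ,δ)-skew Armendariz and satisfies (C_σ), then R is symmetric iff
R[x;σ,δ] is symmetric. -/
theorem stmt6 {R S : Type*} [Ring R] [Ring S] (σ : R →+* R) (δ : R →+ R)
    (hδ : IsSigmaDerivation σ δ) (ι : R →+* S) (X : S)
    (hOre : IsOreExtension σ δ ι X) (hArm : SkewArmendarizSD ι X) (hC : CondC σ) :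
    (∀ a b c : R, a * b * c = 0 → a * c * b = 0) ↔
      (∀ p q r : S, p * q * r = 0 → p * r * q = 0) := by
  constructor
  · intro hSymm p q r hpqr
    obtain ⟨n, a, hp⟩ := hOre.span p
    obtain ⟨n₁, b, hq⟩ := hOre.span q
    obtain ⟨n₂, c, hr⟩ := hOre.span r
    obtain ⟨M, d, hd⟩ := hOre.span (q * r)
    -- step 1 : p * (q*r) = 0 in coefficient form
    have h1 : (∑ i ∈ range (n+1), ι (a i) * X^i) *
        (∑ m ∈ range (M+1), ι (d m) * X^m) = 0 := by
      rw [← hp, ← hd, ← mul_assoc]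
      exact hpqr
    have h2 := hArm n M a d h1
    have had : ∀ i ≤ n, ∀ m ≤ M, a i * d m = 0 := fun i hi m hm =>
      OreSym.extract σ δ ι X hOre hC (h2 i hi m hm)
    -- step 2 : ι (a i) * (q * r) = 0
    have h3 : ∀ i ≤ n, ι (a i) * (q * r) = 0 := by
      intro i hi
      rw [hd, Finset.mul_sum]
      apply Finset.sum_eq_zero
      intro m hm
      rw [← mul_assoc, ← map_mul, had i hi m (by have := Finset.mem_range.mp hm; omega), map_zero, zero_mul]
    -- step 3 : triple coefficient products vanish
    have habc : ∀ i ≤ n, ∀ j ≤ n₁, ∀ k ≤ n₂, a i * b j * c k = 0 := by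
      intro i hi j hj k hk
      have heq : (∑ j ∈ range (n₁+1), ι (a i * b j) * X^j) *
          (∑ k ∈ range (n₂+1), ι (c k) * X^k) = 0 := by
        have hrw : (∑ j ∈ range (n₁+1), ι (a i * b j) * X^j) = ι (a i) * q := by
          rw [hq, Finset.mul_sum]
          apply Finset.sum_congr rfl
          intro j _
          rw [← mul_assoc, ← map_mul]
        rw [hrw, ← hr, mul_assoc]
        exact h3 i hi
      exact OreSym.extract σ δ ι X hOre hC
        (hArm n₁ n₂ (fun j => a i * b j) c heq j hj k hk)
    -- final assembly
    rw [hp, hr, hq, Finset.sum_mul, Finset.sum_mul]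
    apply Finset.sum_eq_zero
    intro i hi
    rw [Finset.mul_sum]
    apply Finset.sum_eq_zero
    intro j hj
    rw [Finset.mul_sum, Finset.sum_mul]
    apply Finset.sum_eq_zero
    intro k hk
    have hi' : i ≤ n := by have := Finset.mem_range.mp hi; omega
    have hj' : j ≤ n₁ := by have := Finset.mem_range.mp hj; omega
    have hk' : k ≤ n₂ := by have := Finset.mem_range.mp hk; omega
    have hacb : a i * c k * b j = 0 := hSymm (a i) (b j) (c k) (habc i hi' j hj' k hk')
    exact OreSym.zfull σ δ ι X hSymm hOre hArm hC i k j (a i) (c k) (b j) hacb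
  · intro hS a b c habc
    have h2 : ι a * ι b * ι c = 0 := by
      rw [← map_mul, ← map_mul, habc, map_zero]
    have h3 := hS _ _ _ h2
    have h4 : ι (a * c * b) = 0 := by rw [map_mul, map_mul]; exact h3
    exact OreSym.iota_inj σ δ ι X hOre h4
end

section
/- A ring R with endomorphism σ is σ-Armendariz if and only if R is σ-skew Armendariz and satisfies condition (C_σ). -/
open Finset

/-- R is σ-Armendariz iff R is σ-skew Armendariz and satisfies (C_σ).
Here S plays the role of the skew polynomial ring R[x;σ] (the Ore extension with δ = 0). -/
theorem stmt7 {R S : Type*} [Ring R] [Ring S] (σ : R →+* R) (ι : R →+* S) (X : S)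
    (hOre : IsOreExtension σ (0 : R →+ R) ι X) :
    (∀ (n m : ℕ) (a b : ℕ → R),
        (∑ i ∈ Finset.range (n + 1), ι (a i) * X ^ i) *
            (∑ j ∈ Finset.range (m + 1), ι (b j) * X ^ j) = 0 →
          ∀ i ≤ n, ∀ j ≤ m, a i * b j = 0) ↔
      ((∀ (n m : ℕ) (a b : ℕ → R),
          (∑ i ∈ Finset.range (n + 1), ι (a i) * X ^ i) *
              (∑ j ∈ Finset.range (m + 1), ι (b j) * X ^ j) = 0 →
            ∀ i ≤ n, ∀ j ≤ m, a i * (⇑σ)^[i] (b j) = 0) ∧ CondC σ) := by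
  obtain ⟨hcomm, hspan, hindep⟩ := hOre
  have hcomm' : ∀ a : R, X * ι a = ι (σ a) * X := by
    intro a
    simpa using hcomm a
  -- cancellation of X on the right
  have hcX : ∀ s : S, s * X = 0 → s = 0 := by
    intro s hs
    obtain ⟨n, c, rfl⟩ := hspan s
    have h2 : (∑ i ∈ Finset.range (n + 1 + 1),
        ι ((fun i => if i = 0 then (0 : R) else c (i - 1)) i) * X ^ i) = 0 := by
      rw [Finset.sum_range_succ']
      have e : ∀ i ∈ Finset.range (n + 1),
          ι ((fun i => if i = 0 then (0 : R) else c (i - 1)) (i + 1)) * X ^ (i + 1)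
          = (ι (c i) * X ^ i) * X := by
        intro i _
        simp [pow_succ, mul_assoc]
      rw [Finset.sum_congr rfl e, ← Finset.sum_mul, hs]
      simp
    have h3 := hindep (n + 1) _ h2
    apply Finset.sum_eq_zero
    intro i hi
    have hi' : i ≤ n := Nat.lt_succ_iff.mp (Finset.mem_range.mp hi)
    have := h3 (i + 1) (by omega)
    simp only [Nat.add_sub_cancel, if_neg (Nat.succ_ne_zero i)] at this
    rw [this]
    simp
  constructor
  · -- σ-Armendariz → σ-skew Armendariz ∧ (C_σ)
    intro hA
    constructor
    · intro n m a b h i hi j hj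
      set P : ℕ → ℕ → R := fun t i => if i + t ≤ n then a (i + t) else 0 with hP
      have key : ∀ t : ℕ, (∑ i ∈ Finset.range (n + 1), ι (P t i) * X ^ i) *
          (∑ j ∈ Finset.range (m + 1), ι ((⇑σ)^[t] (b j)) * X ^ j) = 0 := by
        intro t
        induction t with
        | zero =>
          have e1 : (∑ i ∈ Finset.range (n + 1), ι (P 0 i) * X ^ i)
              = ∑ i ∈ Finset.range (n + 1), ι (a i) * X ^ i := by
            apply Finset.sum_congr rfl
            intro i hi2
            have : i ≤ n := Nat.lt_succ_iff.mp (Finset.mem_range.mp hi2)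
            simp [hP, this]
          have e2 : (∑ j ∈ Finset.range (m + 1), ι ((⇑σ)^[0] (b j)) * X ^ j)
              = ∑ j ∈ Finset.range (m + 1), ι (b j) * X ^ j := by simp
          rw [e1, e2, h]
        | succ t ih =>
          have hcoef : ∀ j ≤ m, P t 0 * (⇑σ)^[t] (b j) = 0 := by
            intro j hj2
            exact hA n m (P t) (fun j => (⇑σ)^[t] (b j)) ih 0 (Nat.zero_le n) j hj2
          have split : (∑ i ∈ Finset.range (n + 1), ι (P t i) * X ^ i)
              = (∑ i ∈ Finset.range (n + 1), ι (P (t + 1) i) * X ^ i) * X + ι (P t 0) := by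
            rw [Finset.sum_range_succ' (fun i => ι (P t i) * X ^ i) n]
            rw [Finset.sum_range_succ (fun i => ι (P (t + 1) i) * X ^ i) n]
            have hz : P (t + 1) n = 0 := by
              simp only [hP]
              rw [if_neg (by omega)]
            rw [hz]
            simp only [map_zero, zero_mul, add_zero, pow_zero, mul_one]
            congr 1
            rw [Finset.sum_mul]
            apply Finset.sum_congr rfl
            intro i _
            have e : P t (i + 1) = P (t + 1) i := by
              simp only [hP]
              rw [show i + 1 + t = i + (t + 1) from by omega]
            rw [e, pow_succ, mul_assoc]
          have gstep : X * (∑ j ∈ Finset.range (m + 1), ι ((⇑σ)^[t] (b j)) * X ^ j)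
              = (∑ j ∈ Finset.range (m + 1), ι ((⇑σ)^[t + 1] (b j)) * X ^ j) * X := by
            rw [Finset.mul_sum, Finset.sum_mul]
            apply Finset.sum_congr rfl
            intro j _
            rw [← mul_assoc, hcomm' ((⇑σ)^[t] (b j)), Function.iterate_succ_apply' σ t (b j)]
            rw [mul_assoc, mul_assoc, ← pow_succ', ← pow_succ]
          have hz2 : ι (P t 0) *
              (∑ j ∈ Finset.range (m + 1), ι ((⇑σ)^[t] (b j)) * X ^ j) = 0 := by
            rw [Finset.mul_sum]
            apply Finset.sum_eq_zero
            intro j hj2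
            rw [← mul_assoc, ← map_mul,
              hcoef j (Nat.lt_succ_iff.mp (Finset.mem_range.mp hj2))]
            simp
          apply hcX
          calc ((∑ i ∈ Finset.range (n + 1), ι (P (t + 1) i) * X ^ i) *
                (∑ j ∈ Finset.range (m + 1), ι ((⇑σ)^[t + 1] (b j)) * X ^ j)) * X
              = (∑ i ∈ Finset.range (n + 1), ι (P (t + 1) i) * X ^ i) *
                ((∑ j ∈ Finset.range (m + 1), ι ((⇑σ)^[t + 1] (b j)) * X ^ j) * X) := by
                rw [mul_assoc]
            _ = (∑ i ∈ Finset.range (n + 1), ι (P (t + 1) i) * X ^ i) *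
                (X * (∑ j ∈ Finset.range (m + 1), ι ((⇑σ)^[t] (b j)) * X ^ j)) := by
                rw [gstep]
            _ = ((∑ i ∈ Finset.range (n + 1), ι (P (t + 1) i) * X ^ i) * X) *
                (∑ j ∈ Finset.range (m + 1), ι ((⇑σ)^[t] (b j)) * X ^ j) := by
                rw [mul_assoc]
            _ = (((∑ i ∈ Finset.range (n + 1), ι (P (t + 1) i) * X ^ i) * X + ι (P t 0)) *
                (∑ j ∈ Finset.range (m + 1), ι ((⇑σ)^[t] (b j)) * X ^ j)) := by
                rw [add_mul, hz2, add_zero]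
            _ = 0 := by rw [← split, ih]
      have := hA n m (P i) (fun j => (⇑σ)^[i] (b j)) (key i) 0 (Nat.zero_le n) j hj
      have e : P i 0 = a i := by simp [hP, hi]
      rwa [e] at this
    · -- (C_σ)
      intro u v huv
      have hf : (∑ i ∈ Finset.range (1 + 1),
          ι ((fun i => if i = 1 then u else 0) i) * X ^ i) *
          (∑ j ∈ Finset.range (0 + 1), ι ((fun _ => v) j) * X ^ j) = 0 := by
        have e : (∑ i ∈ Finset.range (1 + 1),
            ι ((fun i => if i = 1 then u else 0) i) * X ^ i) = ι u * X := by
          rw [Finset.sum_range_succ, Finset.sum_range_one]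
          norm_num
        rw [e, Finset.sum_range_one]
        simp only [pow_zero, mul_one]
        rw [mul_assoc, hcomm' v, ← mul_assoc, ← map_mul, huv, map_zero, zero_mul]
      have := hA 1 0 _ _ hf 1 le_rfl 0 le_rfl
      simpa using this
  · -- converse
    rintro ⟨hskew, hC⟩
    have hiter : ∀ (k : ℕ) (u v : R), u * (⇑σ)^[k] v = 0 → u * v = 0 := by
      intro k
      induction k with
      | zero => intro u v h; simpa using h
      | succ k ih =>
        intro u v h
        have h' : u * (⇑σ)^[k] (σ v) = 0 := by
          rwa [← Function.iterate_succ_apply]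
        exact hC u v (ih u (σ v) h')
    intro n m a b h i hi j hj
    exact hiter i (a i) (b j) (hskew n m a b h i hi j hj)
end

section
/- Let R be a ring with endomorphism σ satisfying condition (C_σ). Then R is reversible if and only if R is σ-reversible (both left and right). -/
/-- If R satisfies (C_σ), then R is reversible iff R is σ-reversible (left and right). -/
theorem stmt8 {R : Type*} [Ring R] (σ : R →+* R) (hC : CondC σ) :
    (∀ a b : R, a * b = 0 → b * a = 0) ↔
      ((∀ a b : R, a * b = 0 → b * σ a = 0) ∧ (∀ a b : R, a * b = 0 → σ b * a = 0)) := by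
  constructor
  · intro hrev
    have hleft : ∀ a b : R, a * b = 0 → σ b * a = 0 := by
      intro a b hab
      have h1 : σ a * σ b = 0 := by rw [← map_mul, hab, map_zero]
      exact hC (σ b) a (hrev _ _ h1)
    refine ⟨fun a b hab => ?_, hleft⟩
    exact hrev _ _ (hleft b a (hrev a b hab))
  · rintro ⟨hr, _⟩ a b hab
    exact hC b a (hr a b hab)
end

section
/- Let R be a ring with endomorphism σ satisfying condition (C_σ). Then R is symmetric if and only if R is σ-symmetric (both left and right). -/
/-- If R satisfies (C_σ), then R is symmetric iff R is σ-symmetric (left and right). -/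
theorem stmt9 {R : Type*} [Ring R] (σ : R →+* R) (hC : CondC σ) :
    (∀ a b c : R, a * b * c = 0 → a * c * b = 0) ↔
      ((∀ a b c : R, a * b * c = 0 → a * c * σ b = 0) ∧
        (∀ a b c : R, a * b * c = 0 → σ b * (a * c) = 0)) := by
  constructor
  · intro hsym
    -- symmetric rings with unity are reversible
    have rev : ∀ x y : R, x * y = 0 → y * x = 0 := by
      intro x y h
      have := hsym 1 x y (by simpa using h)
      simpa using this
    -- from x*y = 0 deduce x*σ(y) = 0
    have key : ∀ x y : R, x * y = 0 → x * σ y = 0 := by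
      intro x y h
      have h1 : σ x * σ y = 0 := by rw [← map_mul, h, map_zero]
      have h2 : σ y * σ x = 0 := rev _ _ h1
      have h3 : σ y * x = 0 := hC _ _ h2
      exact rev _ _ h3
    constructor
    · intro a b c h
      exact key (a * c) b (hsym a b c h)
    · intro a b c h
      exact rev (a * c) (σ b) (key (a * c) b (hsym a b c h))
  · rintro ⟨hr, -⟩
    intro a b c h
    exact hC (a * c) b (hr a b c h)
end

section
/- Let R be a (σ,δ)-skew Armendariz ring satisfying condition (C_σ). The following are equivalent: (1) R is reversible; (2) R is σ-reversible; (3) R is right σ-reversible; (4) R[x;σ,δ] is reversible. -/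
open Finset

/-- For an (σ,δ)-skew Armendariz ring with (C_σ): reversible ⇔ σ-reversible ⇔
right σ-reversible ⇔ R[x;σ,δ] reversible. -/
theorem stmt10 {R S : Type*} [Ring R] [Ring S] (σ : R →+* R) (δ : R →+ R)
    (hδ : IsSigmaDerivation σ δ) (ι : R →+* S) (X : S)
    (hOre : IsOreExtension σ δ ι X) (hArm : SkewArmendarizSD ι X) (hC : CondC σ) :
    List.TFAE
      [∀ a b : R, a * b = 0 → b * a = 0,
       (∀ a b : R, a * b = 0 → b * σ a = 0) ∧ (∀ a b : R, a * b = 0 → σ b * a = 0),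
       ∀ a b : R, a * b = 0 → b * σ a = 0,
       ∀ p q : S, p * q = 0 → q * p = 0] := by
  -- `ι` is injective
  have hinj : ∀ c : R, ι c = 0 → c = 0 := by
    intro c hc
    exact hOre.indep 0 (fun _ => c) (by simp [hc]) 0 le_rfl
  -- σ preserves zero products
  have hσ : ∀ a b : R, a * b = 0 → σ a * σ b = 0 := by
    intro a b h
    have h2 : σ (a * b) = 0 := by rw [h, map_zero]
    rwa [map_mul] at h2
  -- iterated C_σ
  have hCiter : ∀ (i : ℕ) (a b : R), a * (⇑σ)^[i] b = 0 → a * b = 0 := by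
    intro i
    induction i with
    | zero => intro a b h; simpa using h
    | succ i ih =>
      intro a b h
      rw [Function.iterate_succ_apply] at h
      exact hC a b (ih a (σ b) h)
  -- expansion of X^i * ι b
  have hexp : ∀ (i : ℕ) (b : R), ∃ c : ℕ → R,
      X ^ i * ι b = (∑ k ∈ Finset.range (i + 1), ι (c k) * X ^ k) ∧ c i = (⇑σ)^[i] b := by
    intro i
    induction i with
    | zero => intro b; exact ⟨fun _ => b, by simp, rfl⟩
    | succ i ih =>
      intro b
      obtain ⟨c, hc, hci⟩ := ih b
      set cext : ℕ → R := fun k => if k ≤ i then c k else 0 with hcext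
      refine ⟨fun k => (if k = 0 then 0 else σ (cext (k - 1))) + δ (cext k), ?_, ?_⟩
      · have step : X ^ (i + 1) * ι b
            = (∑ k ∈ Finset.range (i + 1), ι (σ (c k)) * X ^ (k + 1))
              + ∑ k ∈ Finset.range (i + 1), ι (δ (c k)) * X ^ k := by
          rw [pow_succ', mul_assoc, hc, Finset.mul_sum, ← Finset.sum_add_distrib]
          refine Finset.sum_congr rfl fun k _ => ?_
          rw [← mul_assoc, hOre.commute, add_mul, mul_assoc, ← pow_succ']
        rw [step]
        have e1 : (∑ k ∈ Finset.range (i + 1 + 1),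
            ι ((if k = 0 then (0:R) else σ (cext (k - 1))) + δ (cext k)) * X ^ k)
            = (∑ k ∈ Finset.range (i + 1 + 1), ι (if k = 0 then (0:R) else σ (cext (k - 1))) * X ^ k)
              + ∑ k ∈ Finset.range (i + 1 + 1), ι (δ (cext k)) * X ^ k := by
          rw [← Finset.sum_add_distrib]
          refine Finset.sum_congr rfl fun k _ => ?_
          rw [map_add, add_mul]
        rw [e1]
        congr 1
        · conv_rhs => rw [Finset.sum_range_succ']
          simp only [Nat.add_sub_cancel, Nat.succ_ne_zero, if_false, reduceIte, map_zero,
            zero_mul, add_zero]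
          refine Finset.sum_congr rfl fun k hk => ?_
          have hk' : k ≤ i := Nat.lt_succ_iff.mp (Finset.mem_range.mp hk)
          simp [hcext, hk']
        · conv_rhs => rw [Finset.sum_range_succ]
          have h2 : cext (i + 1) = 0 := by simp [hcext]
          rw [h2, map_zero, map_zero, zero_mul, add_zero]
          refine Finset.sum_congr rfl fun k hk => ?_
          have hk' : k ≤ i := Nat.lt_succ_iff.mp (Finset.mem_range.mp hk)
          simp [hcext, hk']
      · have h1 : cext i = c i := by rw [hcext]; simp
        have h2 : cext (i + 1) = 0 := by rw [hcext]; simp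
        simp only [Nat.add_sub_cancel, if_neg (Nat.succ_ne_zero _), h1, h2, map_zero, add_zero,
          hci, Function.iterate_succ_apply']
  -- sum shift helper
  have hshift : ∀ (j m : ℕ) (F : ℕ → S),
      (∑ t ∈ Finset.range (j + m), if j ≤ t then F (t - j) else 0) = ∑ k ∈ Finset.range m, F k := by
    intro j m F
    induction m with
    | zero =>
      rw [Finset.sum_range_zero]
      refine Finset.sum_eq_zero fun t ht => ?_
      rw [if_neg]
      exact Nat.not_le.mpr (by simpa using Finset.mem_range.mp ht)
    | succ m ih =>
      rw [Nat.add_succ, Finset.sum_range_succ, Finset.sum_range_succ, ih,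
        if_pos (Nat.le_add_right j m), Nat.add_sub_cancel_left]
  -- extraction: from a product of monomials being zero, the coefficients annihilate
  have hext : ∀ (i j : ℕ) (a b : R), ι a * X ^ i * (ι b * X ^ j) = 0 → a * b = 0 := by
    intro i j a b h
    obtain ⟨c, hc, hci⟩ := hexp i b
    refine hCiter i a b ?_
    rw [← hci]
    have key : (∑ t ∈ Finset.range (i + j + 1),
        ι ((fun t => if j ≤ t then a * c (t - j) else 0) t) * X ^ t) = 0 := by
      have e2 : (∑ t ∈ Finset.range (i + j + 1),
          ι ((fun t => if j ≤ t then a * c (t - j) else 0) t) * X ^ t)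
          = ∑ k ∈ Finset.range (i + 1), ι (a * c k) * X ^ (k + j) := by
        rw [show i + j + 1 = j + (i + 1) from by omega,
          ← hshift j (i + 1) (fun k => ι (a * c k) * X ^ (k + j))]
        refine Finset.sum_congr rfl fun t _ => ?_
        by_cases ht : j ≤ t
        · simp only [ht, if_true]
          rw [Nat.sub_add_cancel ht]
        · simp [ht]
      rw [e2]
      have e3 : (∑ k ∈ Finset.range (i + 1), ι (a * c k) * X ^ (k + j))
          = ι a * (X ^ i * ι b) * X ^ j := by
        rw [hc, Finset.mul_sum, Finset.sum_mul]
        refine Finset.sum_congr rfl fun k _ => ?_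
        simp [map_mul, pow_add, mul_assoc]
      rw [e3]
      simp only [mul_assoc] at h ⊢
      exact h
    have := hOre.indep (i + j) _ key (i + j) le_rfl
    simpa [Nat.le_add_left, Nat.add_sub_cancel] using this
  -- Armendariz consequences: δa·b = 0 and σa·δb = 0 from ab = 0
  have hArm2 : ∀ a b : R, a * b = 0 → δ a * b = 0 ∧ σ a * δ b = 0 := by
    intro a b hab
    have e : (∑ i ∈ Finset.range (1 + 1),
        ι ((fun i => if i = 0 then δ a else σ a) i) * X ^ i) = X * ι a := by
      rw [Finset.sum_range_succ, Finset.sum_range_one, hOre.commute a]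
      simp [add_comm]
    have hzero : (∑ i ∈ Finset.range (1 + 1),
          ι ((fun i => if i = 0 then δ a else σ a) i) * X ^ i) *
        (∑ j ∈ Finset.range (0 + 1), ι ((fun _ => b) j) * X ^ j) = 0 := by
      rw [e]
      simp only [zero_add, Finset.sum_range_one, pow_zero, mul_one]
      rw [mul_assoc, ← map_mul, hab, map_zero, mul_zero]
    have h0 := hArm 1 0 _ _ hzero 0 (by norm_num) 0 le_rfl
    have h1' := hArm 1 0 _ _ hzero 1 le_rfl 0 le_rfl
    constructor
    · simp only [pow_zero, mul_one, if_pos rfl] at h0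
      rw [← map_mul] at h0
      exact hinj _ h0
    · simp only [pow_zero, pow_one, mul_one, if_neg one_ne_zero] at h1'
      rw [mul_assoc, hOre.commute b, mul_add, ← mul_assoc, ← map_mul] at h1'
      rw [hσ a b hab, map_zero, zero_mul, zero_add, ← map_mul] at h1'
      exact hinj _ h1'
  -- the key closure lemma under reversibility
  have hL : (∀ u v : R, u * v = 0 → v * u = 0) → ∀ a b : R, a * b = 0 →
      a * σ b = 0 ∧ a * δ b = 0 := by
    intro h1 a b hab
    constructor
    · exact h1 _ _ (hC _ _ (h1 _ _ (hσ a b hab)))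
    · exact h1 _ _ (hC _ _ (h1 _ _ (hArm2 a b hab).2))
  -- main: zero products pass across powers of X, under reversibility
  have hmain : (∀ u v : R, u * v = 0 → v * u = 0) →
      ∀ (j : ℕ) (u v : R), u * v = 0 → ι u * (X ^ j * ι v) = 0 := by
    intro h1 j
    induction j with
    | zero => intro u v huv; rw [pow_zero, one_mul, ← map_mul, huv, map_zero]
    | succ j ih =>
      intro u v huv
      have hs := (hL h1 u v huv).1
      have hd := (hL h1 u v huv).2
      have e : X ^ (j + 1) * ι v = (X ^ j * ι (σ v)) * X + X ^ j * ι (δ v) := by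
        rw [pow_succ, mul_assoc, hOre.commute v, mul_add, ← mul_assoc]
      rw [e, mul_add, ← mul_assoc, ih u (σ v) hs, ih u (δ v) hd, zero_mul, zero_add]
  tfae_have 3 → 1 := fun h3 a b hab => hC b a (h3 a b hab)
  tfae_have 2 → 3 := fun h2 => h2.1
  tfae_have 1 → 2 := by
    intro h1
    exact ⟨fun a b hab => (hL h1 b a (h1 a b hab)).1,
           fun a b hab => hC (σ b) a (hσ b a (h1 a b hab))⟩
  tfae_have 4 → 3 := by
    intro h4 a b hab
    have h0 : ι a * (ι b * X) = 0 := by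
      rw [← mul_assoc, ← map_mul, hab, map_zero, zero_mul]
    have h5 := h4 _ _ h0
    have h6 : (∑ t ∈ Finset.range (1 + 1),
        ι ((fun t => if t = 0 then b * δ a else b * σ a) t) * X ^ t) = 0 := by
      rw [Finset.sum_range_succ, Finset.sum_range_one]
      norm_num
      rw [mul_assoc, hOre.commute a, mul_add, ← mul_assoc] at h5
      rw [add_comm]
      exact h5
    have := hOre.indep 1 _ h6 1 le_rfl
    simpa using this
  tfae_have 1 → 4 := by
    intro h1 p q hpq
    obtain ⟨n, a, hp⟩ := hOre.span p
    obtain ⟨m, b, hq⟩ := hOre.span q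
    have hz := hArm n m a b (by rw [← hp, ← hq]; exact hpq)
    rw [hp, hq, Finset.sum_mul]
    refine Finset.sum_eq_zero fun j hj => ?_
    rw [Finset.mul_sum]
    refine Finset.sum_eq_zero fun i hi => ?_
    have hi' : i ≤ n := Nat.lt_succ_iff.mp (Finset.mem_range.mp hi)
    have hj' : j ≤ m := Nat.lt_succ_iff.mp (Finset.mem_range.mp hj)
    have hab : a i * b j = 0 := hext i j _ _ (hz i hi' j hj')
    have hba : b j * a i = 0 := h1 _ _ hab
    have hm := hmain h1 j (b j) (a i) hba
    have e : ι (b j) * X ^ j * (ι (a i) * X ^ i) = (ι (b j) * (X ^ j * ι (a i))) * X ^ i := by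
      rw [mul_assoc, mul_assoc, ← mul_assoc (X ^ j)]
    rw [e, hm, zero_mul]
  tfae_finish
end

section
/- Let R be a (σ,δ)-skew Armendariz ring satisfying condition (C_σ). The following are equivalent: (1) R is symmetric; (2) R is σ-symmetric; (3) R is right σ-symmetric; (4) R[x;σ,δ] is symmetric. -/
open Finset

section Aux

variable {R S : Type*} [Ring R] [Ring S]

/-- Words in σ and δ applied to a base element. -/
inductive SDWord (σ : R →+* R) (δ : R →+ R) (b : R) : R → Prop
  | base : SDWord σ δ b b
  | sig {y} : SDWord σ δ b y → SDWord σ δ b (σ y)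
  | del {y} : SDWord σ δ b y → SDWord σ δ b (δ y)

lemma SDWord.trans {σ : R →+* R} {δ : R →+ R} {b y z : R}
    (h1 : SDWord σ δ y z) (h2 : SDWord σ δ b y) : SDWord σ δ b z := by
  induction h1 with
  | base => exact h2
  | sig _ ih => exact SDWord.sig ih
  | del _ ih => exact SDWord.del ih

variable {σ : R →+* R} {δ : R →+ R} {ι : R →+* S} {X : S}

lemma inj_iota (hOre : IsOreExtension σ δ ι X) {r : R} (h : ι r = 0) : r = 0 := by
  refine hOre.indep 0 (fun _ => r) ?_ 0 le_rfl
  simp [h]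

lemma csIter (hC : CondC σ) (m : ℕ) (a b : R) (h : a * σ^[m] b = 0) : a * b = 0 := by
  induction m generalizing b with
  | zero => simpa using h
  | succ m ih =>
    rw [Function.iterate_succ_apply] at h
    exact hC a b (ih (σ b) h)

/-- expansion of X^m * ι c with known top coefficient. -/
lemma expandF (hOre : IsOreExtension σ δ ι X) (m : ℕ) (c : R) :
    ∃ d : ℕ → R, d m = σ^[m] c ∧ X ^ m * ι c = ∑ l ∈ range (m + 1), ι (d l) * X ^ l := by
  induction m generalizing c with
  | zero => exact ⟨fun _ => c, rfl, by simp⟩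
  | succ m ih =>
    obtain ⟨d1, hd1top, hd1⟩ := ih (σ c)
    obtain ⟨d2, _, hd2⟩ := ih (δ c)
    refine ⟨fun l => (if l = 0 then 0 else d1 (l - 1)) + (if l = m + 1 then 0 else d2 l),
      ?_, ?_⟩
    · simp [hd1top, Function.iterate_succ_apply]
    · have h1 : ∑ l ∈ range (m + 1 + 1), ι (if l = 0 then (0:R) else d1 (l - 1)) * X ^ l
          = ∑ l ∈ range (m + 1), ι (d1 l) * X ^ l * X := by
        rw [Finset.sum_range_succ' (fun l => ι (if l = 0 then (0:R) else d1 (l - 1)) * X ^ l) (m+1)]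
        simp [pow_succ, mul_assoc]
      have h2 : ∑ l ∈ range (m + 1 + 1), ι (if l = m + 1 then (0:R) else d2 l) * X ^ l
          = ∑ l ∈ range (m + 1), ι (d2 l) * X ^ l := by
        rw [Finset.sum_range_succ (fun l => ι (if l = m + 1 then (0:R) else d2 l) * X ^ l) (m+1),
          if_pos rfl]
        simp only [map_zero, zero_mul, add_zero]
        exact Finset.sum_congr rfl fun l hl => by
          have hne : l ≠ m + 1 := by simp only [Finset.mem_range] at hl; omega
          rw [if_neg hne]
      calc X ^ (m + 1) * ι c
          = (∑ l ∈ range (m + 1), ι (d1 l) * X ^ l * X) +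
              ∑ l ∈ range (m + 1), ι (d2 l) * X ^ l := by
            rw [pow_succ, mul_assoc, hOre.commute c, mul_add, ← mul_assoc, hd1, hd2,
              Finset.sum_mul]
        _ = (∑ l ∈ range (m + 1 + 1), ι (if l = 0 then (0:R) else d1 (l - 1)) * X ^ l) +
              ∑ l ∈ range (m + 1 + 1), ι (if l = m + 1 then (0:R) else d2 l) * X ^ l := by
            rw [h1, h2]
        _ = ∑ l ∈ range (m + 1 + 1),
              ι ((if l = 0 then (0:R) else d1 (l - 1)) + (if l = m + 1 then 0 else d2 l)) * X ^ l := by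
            rw [← Finset.sum_add_distrib]
            exact Finset.sum_congr rfl fun l _ => by rw [map_add, add_mul]

/-- extraction of the top coefficient. -/
lemma extractE (hOre : IsOreExtension σ δ ι X) (m k : ℕ) (e c : R)
    (h : ι e * (X ^ m * (ι c * X ^ k)) = 0) : e * σ^[m] c = 0 := by
  obtain ⟨d, hdtop, hd⟩ := expandF hOre m c
  set c' : ℕ → R := fun t => if k ≤ t then e * d (t - k) else 0 with hc'
  have hsum : ∑ t ∈ range (m + k + 1), ι (c' t) * X ^ t = 0 := by
    have e1 : ∑ t ∈ range (m + k + 1), ι (c' t) * X ^ t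
        = ∑ t ∈ Finset.Ico k (m + k + 1), ι (c' t) * X ^ t := by
      rw [Finset.range_eq_Ico, ← Finset.sum_Ico_consecutive _ (Nat.zero_le k) (by omega)]
      have : ∑ t ∈ Finset.Ico 0 k, ι (c' t) * X ^ t = 0 := by
        refine Finset.sum_eq_zero fun t ht => ?_
        simp only [Finset.mem_Ico] at ht
        simp [hc', if_neg (by omega : ¬ k ≤ t)]
      rw [this, zero_add]
    have e2 : ∑ t ∈ Finset.Ico k (m + k + 1), ι (c' t) * X ^ t
        = ∑ l ∈ range (m + 1), ι (e * d l) * X ^ (k + l) := by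
      rw [Finset.sum_Ico_eq_sum_range]
      refine Finset.sum_congr (by congr 1; omega) fun l _ => ?_
      simp [hc', if_pos (Nat.le_add_right k l)]
    rw [e1, e2]
    calc ∑ l ∈ range (m + 1), ι (e * d l) * X ^ (k + l)
        = ∑ l ∈ range (m + 1), ι e * (ι (d l) * X ^ l * X ^ k) := by
          refine Finset.sum_congr rfl fun l _ => ?_
          rw [Nat.add_comm k l, map_mul, pow_add, mul_assoc, mul_assoc]
      _ = ι e * ((∑ l ∈ range (m + 1), ι (d l) * X ^ l) * X ^ k) := by
          rw [Finset.sum_mul, Finset.mul_sum]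
      _ = 0 := by
          rw [← hd]
          simpa only [mul_assoc] using h
  have h0 : c' (m + k) = e * σ^[m] c := by
    simp [hc', hdtop, Nat.add_sub_cancel]
  rw [← h0]
  exact hOre.indep (m + k) c' hsum (m + k) le_rfl

/-- combined extraction: top coefficient + iterated C_σ. -/
lemma extractEC (hOre : IsOreExtension σ δ ι X) (hC : CondC σ) {m k : ℕ} {e c : R}
    (h : (ι e * X ^ m) * (ι c * X ^ k) = 0) : e * c = 0 := by
  refine csIter hC m e c (extractE hOre m k e c ?_)
  simpa only [mul_assoc] using h

/-- K3: right absorption. -/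
lemma lemK3 (hOre : IsOreExtension σ δ ι X) :
    ∀ (k : ℕ) (a b : R) (j : ℕ), (∀ z, SDWord σ δ b z → a * z = 0) →
      ι a * (X ^ k * (ι b * X ^ j)) = 0 := by
  intro k
  induction k with
  | zero =>
    intro a b j h
    rw [pow_zero, one_mul, ← mul_assoc, ← map_mul, h b SDWord.base, map_zero, zero_mul]
  | succ k ih =>
    intro a b j h
    have : X ^ (k + 1) * (ι b * X ^ j)
        = X ^ k * (ι (σ b) * X ^ (j + 1)) + X ^ k * (ι (δ b) * X ^ j) := by
      rw [pow_succ, mul_assoc, ← mul_assoc X (ι b) (X ^ j), hOre.commute b, add_mul,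
        mul_assoc (ι (σ b)) X (X ^ j), ← pow_succ', mul_add]
    rw [this, mul_add,
      ih a (σ b) (j + 1) (fun z hz => h z (hz.trans SDWord.base.sig)),
      ih a (δ b) j (fun z hz => h z (hz.trans SDWord.base.del)), add_zero]

/-- K2: middle and right absorption. -/
lemma lemK2 (hOre : IsOreExtension σ δ ι X) :
    ∀ (i : ℕ) (a c : R) (k : ℕ) (b : R) (j : ℕ),
      (∀ y z, SDWord σ δ c y → SDWord σ δ b z → a * y * z = 0) →
      ι a * (X ^ i * (ι c * (X ^ k * (ι b * X ^ j)))) = 0 := by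
  intro i
  induction i with
  | zero =>
    intro a c k b j h
    rw [pow_zero, one_mul, ← mul_assoc, ← map_mul]
    exact lemK3 hOre k (a * c) b j (fun z hz => h c z SDWord.base hz)
  | succ i ih =>
    intro a c k b j h
    have : X ^ (i + 1) * (ι c * (X ^ k * (ι b * X ^ j)))
        = X ^ i * (ι (σ c) * (X ^ (k + 1) * (ι b * X ^ j)))
          + X ^ i * (ι (δ c) * (X ^ k * (ι b * X ^ j))) := by
      rw [pow_succ, mul_assoc, ← mul_assoc X (ι c) _, hOre.commute c, add_mul,
        mul_assoc (ι (σ c)) X _, ← mul_assoc X (X ^ k) _, ← pow_succ', mul_add]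
    rw [this, mul_add,
      ih a (σ c) (k + 1) b j (fun y z hy hz => h y z (hy.trans SDWord.base.sig) hz),
      ih a (δ c) k b j (fun y z hy hz => h y z (hy.trans SDWord.base.del) hz), add_zero]

lemma revR (hsym : ∀ a b c : R, a * b * c = 0 → a * c * b = 0) {x y : R}
    (h : x * y = 0) : y * x = 0 := by
  have := hsym 1 x y (by simpa using h)
  simpa using this

lemma Lsig (hsym : ∀ a b c : R, a * b * c = 0 → a * c * b = 0) (hC : CondC σ)
    {x y : R} (h : x * y = 0) : x * σ y = 0 := by
  have hyx : y * x = 0 := revR hsym h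
  have h1 : σ y * σ x = 0 := by rw [← map_mul, hyx, map_zero]
  exact revR hsym (hC (σ y) x h1)

lemma Ldel (hOre : IsOreExtension σ δ ι X) (hArm : SkewArmendarizSD ι X)
    (hsym : ∀ a b c : R, a * b * c = 0 → a * c * b = 0)
    {x y : R} (h : x * y = 0) : x * δ y = 0 := by
  have hyx : y * x = 0 := revR hsym h
  set a : ℕ → R := fun i => if i = 0 then δ y else σ y with ha
  set b : ℕ → R := fun _ => x with hb
  have hprod : (∑ i ∈ range (1 + 1), ι (a i) * X ^ i) *
      (∑ j ∈ range (0 + 1), ι (b j) * X ^ j) = 0 := by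
    have e1 : ∑ i ∈ range (1 + 1), ι (a i) * X ^ i = X * ι y := by
      rw [Finset.sum_range_succ, Finset.sum_range_one, hOre.commute y]
      simp [ha, add_comm]
    have e2 : ∑ j ∈ range (0 + 1), ι (b j) * X ^ j = ι x := by
      simp [hb]
    rw [e1, e2, mul_assoc, ← map_mul, hyx, map_zero, mul_zero]
  have := hArm 1 0 a b hprod 0 (by omega) 0 le_rfl
  simp only [ha, hb, if_pos rfl, pow_zero, mul_one, ← map_mul] at this
  exact revR hsym (inj_iota hOre this)

/-- From abc = 0 in a symmetric ring with C_σ: all word products vanish. -/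
lemma wordProd (hOre : IsOreExtension σ δ ι X) (hArm : SkewArmendarizSD ι X)
    (hsym : ∀ a b c : R, a * b * c = 0 → a * c * b = 0) (hC : CondC σ)
    {a b c : R} (h : a * b * c = 0) :
    ∀ y z, SDWord σ δ c y → SDWord σ δ b z → a * y * z = 0 := by
  have hacb : a * c * b = 0 := hsym a b c h
  -- Claim A: ∀ y, Word c y → a * y * b = 0
  have claimA : ∀ y, SDWord σ δ c y → a * y * b = 0 := by
    intro y hy
    induction hy with
    | base => exact hacb
    | @sig y hy ih =>
      have h1 : a * b * y = 0 := hsym a y b ih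
      exact hsym a b (σ y) (Lsig hsym hC h1)
    | @del y hy ih =>
      have h1 : a * b * y = 0 := hsym a y b ih
      exact hsym a b (δ y) (Ldel hOre hArm hsym h1)
  intro y z hy hz
  induction hz with
  | base => exact claimA y hy
  | @sig z hz ih => exact Lsig hsym hC ih
  | @del z hz ih => exact Ldel hOre hArm hsym ih

lemma main14 (hOre : IsOreExtension σ δ ι X) (hArm : SkewArmendarizSD ι X) (hC : CondC σ)
    (hsym : ∀ a b c : R, a * b * c = 0 → a * c * b = 0) :
    ∀ p q r : S, p * q * r = 0 → p * r * q = 0 := by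
  intro p q r h
  obtain ⟨na, af, hp⟩ := hOre.span p
  obtain ⟨nb, bf, hq⟩ := hOre.span q
  obtain ⟨nc, cf, hr⟩ := hOre.span r
  obtain ⟨nd, df, hqr⟩ := hOre.span (q * r)
  -- step 1: a_i * d_l = 0
  have step1 : ∀ i ≤ na, ∀ l ≤ nd, af i * df l = 0 := by
    have hprod : (∑ i ∈ range (na + 1), ι (af i) * X ^ i) *
        (∑ l ∈ range (nd + 1), ι (df l) * X ^ l) = 0 := by
      rw [← hp, ← hqr, ← mul_assoc]; exact h
    intro i hi l hl
    exact extractEC hOre hC (hArm na nd af df hprod i hi l hl)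
  -- step 2: ι(a_i) * (q * r) = 0
  have step2 : ∀ i ≤ na, ι (af i) * (q * r) = 0 := by
    intro i hi
    rw [hqr, Finset.mul_sum]
    refine Finset.sum_eq_zero fun l hl => ?_
    rw [← mul_assoc, ← map_mul, step1 i hi l (by simpa using Nat.lt_succ_iff.mp (Finset.mem_range.mp hl)),
      map_zero, zero_mul]
  -- step 3: a_i * b_j * c_k = 0
  have step3 : ∀ i ≤ na, ∀ j ≤ nb, ∀ k ≤ nc, af i * bf j * cf k = 0 := by
    intro i hi j hj k hk
    have e1 : ∑ j ∈ range (nb + 1), ι (af i * bf j) * X ^ j = ι (af i) * q := by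
      rw [hq, Finset.mul_sum]
      exact Finset.sum_congr rfl fun j _ => by rw [map_mul, mul_assoc]
    have hprod : (∑ j ∈ range (nb + 1), ι (af i * bf j) * X ^ j) *
        (∑ k ∈ range (nc + 1), ι (cf k) * X ^ k) = 0 := by
      rw [e1, ← hr, mul_assoc, step2 i hi]
    exact extractEC hOre hC (hArm nb nc _ cf hprod j hj k hk)
  -- conclude
  rw [hp, hq, hr]
  simp only [Finset.sum_mul, Finset.mul_sum]
  refine Finset.sum_eq_zero fun j hj => ?_
  refine Finset.sum_eq_zero fun k hk => ?_
  refine Finset.sum_eq_zero fun i hi => ?_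
  have habc : af i * bf j * cf k = 0 :=
    step3 i (Nat.lt_succ_iff.mp (Finset.mem_range.mp hi))
      j (Nat.lt_succ_iff.mp (Finset.mem_range.mp hj))
      k (Nat.lt_succ_iff.mp (Finset.mem_range.mp hk))
  have hK := lemK2 hOre i (af i) (cf k) k (bf j) j (wordProd hOre hArm hsym hC habc)
  simp only [mul_assoc]
  simpa only [mul_assoc] using hK

lemma easy41 (hOre : IsOreExtension σ δ ι X)
    (h4 : ∀ p q r : S, p * q * r = 0 → p * r * q = 0) :
    ∀ a b c : R, a * b * c = 0 → a * c * b = 0 := by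
  intro a b c habc
  have h1 : ι a * ι b * ι c = 0 := by
    rw [← map_mul, ← map_mul, habc, map_zero]
  have h2 := h4 (ι a) (ι b) (ι c) h1
  apply inj_iota hOre
  rw [map_mul, map_mul]
  exact h2

lemma easy42r (hOre : IsOreExtension σ δ ι X)
    (h4 : ∀ p q r : S, p * q * r = 0 → p * r * q = 0) :
    ∀ a b c : R, a * b * c = 0 → a * c * σ b = 0 := by
  intro a b c habc
  have h1 : ι a * ι b * (ι c * X) = 0 := by
    rw [← mul_assoc, ← map_mul, ← map_mul, habc, map_zero, zero_mul]
  have h2 := h4 (ι a) (ι b) (ι c * X) h1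
  -- ι a * (ι c * X) * ι b = ι(a*c*σ b) * X + ι(a*c*δ b)
  have e : ι a * (ι c * X) * ι b
      = ι (a * c * σ b) * X + ι (a * c * δ b) := by
    rw [← mul_assoc, ← map_mul, mul_assoc, hOre.commute b, mul_add, ← mul_assoc,
      ← map_mul, ← map_mul]
  set cf : ℕ → R := fun t => if t = 0 then a * c * δ b else a * c * σ b with hcf
  have hsum : ∑ t ∈ range (1 + 1), ι (cf t) * X ^ t = 0 := by
    rw [Finset.sum_range_succ, Finset.sum_range_one]
    simp only [hcf, if_pos rfl, pow_zero, mul_one, pow_one, if_neg one_ne_zero]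
    rw [add_comm, ← e]
    exact h2
  have := hOre.indep 1 cf hsum 1 le_rfl
  simpa [hcf] using this

lemma easy42l (hOre : IsOreExtension σ δ ι X) (hArm : SkewArmendarizSD ι X)
    (h4 : ∀ p q r : S, p * q * r = 0 → p * r * q = 0) :
    ∀ a b c : R, a * b * c = 0 → σ b * (a * c) = 0 := by
  intro a b c habc
  have hsymm := easy41 hOre h4
  have hacb : a * c * b = 0 := hsymm a b c habc
  have hbac : b * (a * c) = 0 := revR hsymm hacb
  have hdel : δ b * (a * c) = 0 := revR hsymm (Ldel hOre hArm hsymm hacb)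
  have key : ι (σ b) * X * ι (a * c) = 0 := by
    have h0 : X * ι b * ι (a * c) = 0 := by
      rw [mul_assoc, ← map_mul, hbac, map_zero, mul_zero]
    rw [hOre.commute b, add_mul, ← map_mul, hdel, map_zero, add_zero] at h0
    exact h0
  have h2 := h4 (ι (σ b)) X (ι (a * c)) key
  set cf : ℕ → R := fun t => if t = 0 then 0 else σ b * (a * c) with hcf
  have hsum : ∑ t ∈ range (1 + 1), ι (cf t) * X ^ t = 0 := by
    rw [Finset.sum_range_succ, Finset.sum_range_one]
    simp only [hcf, if_pos rfl, map_zero, zero_mul, pow_one, if_neg one_ne_zero, zero_add]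
    rw [map_mul]
    exact h2
  have := hOre.indep 1 cf hsum 1 le_rfl
  simpa [hcf] using this

end Aux

/-- For an (σ,δ)-skew Armendariz ring with (C_σ): symmetric ⇔ σ-symmetric ⇔
right σ-symmetric ⇔ R[x;σ,δ] symmetric. -/
theorem stmt11 {R S : Type*} [Ring R] [Ring S] (σ : R →+* R) (δ : R →+ R)
    (hδ : IsSigmaDerivation σ δ) (ι : R →+* S) (X : S)
    (hOre : IsOreExtension σ δ ι X) (hArm : SkewArmendarizSD ι X) (hC : CondC σ) :
    List.TFAE
      [∀ a b c : R, a * b * c = 0 → a * c * b = 0,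
       (∀ a b c : R, a * b * c = 0 → a * c * σ b = 0) ∧
         (∀ a b c : R, a * b * c = 0 → σ b * (a * c) = 0),
       ∀ a b c : R, a * b * c = 0 → a * c * σ b = 0,
       ∀ p q r : S, p * q * r = 0 → p * r * q = 0] := by
  tfae_have 1 → 4 := fun h1 => main14 hOre hArm hC h1
  tfae_have 4 → 2 := fun h4 => ⟨easy42r hOre h4, easy42l hOre hArm h4⟩
  tfae_have 2 → 3 := fun h2 => h2.1
  tfae_have 3 → 1 := fun h3 a b c habc => hC (a * c) b (h3 a b c habc)
  tfae_finish
end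

section
/- Let R be a right σ-reversible ring with σ(1) = 1 and δ a σ-derivation. Then for every idempotent e ∈ R, σ(e) = e and δ(e) = 0. -/
/-- If R is right σ-reversible (with σ(1)=1), then σ(e) = e and δ(e) = 0 for every
idempotent e. -/
theorem stmt12 {R : Type*} [Ring R] (σ : R →+* R) (δ : R →+ R)
    (hδ : IsSigmaDerivation σ δ)
    (hrev : ∀ a b : R, a * b = 0 → b * σ a = 0) :
    ∀ e : R, e * e = e → σ e = e ∧ δ e = 0 := by
  intro e he
  have h1 : e * (1 - e) = 0 := by rw [mul_sub, mul_one, he, sub_self]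
  have h2 : (1 - e) * e = 0 := by rw [sub_mul, one_mul, he, sub_self]
  have h3 : (1 - e) * σ e = 0 := hrev _ _ h1
  have h4 : e * σ (1 - e) = 0 := hrev _ _ h2
  rw [map_sub, map_one, mul_sub, mul_one, sub_eq_zero] at h4
  rw [sub_mul, one_mul, sub_eq_zero] at h3
  have hσ : σ e = e := by rw [h3, ← h4]
  have hd : δ e = e * δ e + δ e * e := by
    have := hδ e e; rw [he, hσ] at this; exact this
  have hede : e * (δ e * e) = 0 := by
    have h5 : e * δ e = e * δ e + e * (δ e * e) := by
      conv_lhs => rw [hd]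
      rw [mul_add, ← mul_assoc, he]
    exact (left_eq_add.mp h5).symm ▸ rfl
  have hde : δ e * e = 0 := by
    have h6 := hrev _ _ hede
    rw [hσ, mul_assoc, he] at h6
    exact h6
  have hed : (1 - e) * δ e = 0 := by
    rw [sub_mul, one_mul, sub_eq_zero]
    conv_lhs => rw [hd, hde, add_zero]
  have h7 := hrev _ _ hed
  rw [map_sub, map_one, hσ, mul_sub, mul_one, hde, sub_zero] at h7
  exact ⟨hσ, h7⟩
end

section
/- Let R be a right σ-reversible ring with σ(1) = 1. Then R is abelian, i.e., every idempotent of R is central. -/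
/-- If R is right σ-reversible (with σ(1)=1), then R is abelian: every idempotent
is central. -/
theorem stmt13 {R : Type*} [Ring R] (σ : R →+* R)
    (hrev : ∀ a b : R, a * b = 0 → b * σ a = 0) :
    ∀ e : R, e * e = e → ∀ r : R, e * r = r * e := by
  -- First: any idempotent is fixed by σ
  have hfix : ∀ e : R, e * e = e → σ e = e := by
    intro e he
    have h1 : e * (1 - e) = 0 := by rw [mul_sub, mul_one, he, sub_self]
    have h2 : (1 - e) * e = 0 := by rw [sub_mul, one_mul, he, sub_self]
    have h3 := hrev e (1 - e) h1        -- (1-e) * σ e = 0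
    have h4 := hrev (1 - e) e h2        -- e * σ (1-e) = 0
    have h6 : e * σ e = e := by
      have h : e * (1 - σ e) = 0 := by simpa [map_sub, map_one] using h4
      rw [mul_sub, mul_one] at h
      exact (sub_eq_zero.mp h).symm
    have h8 : σ e = e * σ e := by
      rw [sub_mul, one_mul] at h3
      exact sub_eq_zero.mp h3
    rw [h8, h6]
  intro e he r
  have hσe : σ e = e := hfix e he
  -- re = ere
  have hre : r * e = e * r * e := by
    have h1 : e * (r * e - e * r * e) = 0 := by
      have h : e * (r * e - e * r * e) = e * r * e - e * e * r * e := by noncomm_ring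
      rw [h, he, sub_self]
    have h2 := hrev e (r * e - e * r * e) h1
    rw [hσe] at h2
    have h3 : (r * e - e * r * e) * e = r * (e * e) - e * r * (e * e) := by noncomm_ring
    rw [h3, he] at h2
    exact sub_eq_zero.mp h2
  -- er = ere via the idempotent 1 - e
  have hf : (1 - e) * (1 - e) = 1 - e := by
    rw [mul_sub, mul_one, sub_mul, one_mul, he]
    abel
  have hσf : σ (1 - e) = 1 - e := hfix (1 - e) hf
  have her : e * r = e * r * e := by
    have h1 : (1 - e) * (r * (1 - e) - (1 - e) * r * (1 - e)) = 0 := by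
      have h : (1 - e) * (r * (1 - e) - (1 - e) * r * (1 - e))
          = (1 - e) * r * (1 - e) - ((1 - e) * (1 - e)) * r * (1 - e) := by noncomm_ring
      rw [h, hf, sub_self]
    have h2 := hrev (1 - e) _ h1
    rw [hσf] at h2
    have h3 : (r * (1 - e) - (1 - e) * r * (1 - e)) * (1 - e)
        = r * ((1 - e) * (1 - e)) - (1 - e) * r * ((1 - e) * (1 - e)) := by noncomm_ring
    rw [h3, hf] at h2
    -- h2 : r * (1 - e) - (1 - e) * r * (1 - e) = 0
    have h4 : r * (1 - e) = (1 - e) * r * (1 - e) := sub_eq_zero.mp h2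
    have h5 : e * r - e * r * e = r * (1 - e) - (1 - e) * r * (1 - e) := by noncomm_ring
    rw [h4, sub_self] at h5
    exact sub_eq_zero.mp h5
  rw [her, hre]
end

section
/- Let R be a right σ-reversible ring satisfying condition (C_σ) with σ(1) = 1, and δ a σ-derivation. If R is a Baer ring, then the Ore extension R[x;σ,δ] is a Baer ring. -/
open Finset

/-- Right annihilator of a subset. -/
def rightAnn {S : Type*} [Ring S] (A : Set S) : Set S := {c | ∀ x ∈ A, x * c = 0}

/-- A ring is Baer: the right annihilator of every nonempty subset equals eS for an
idempotent e. -/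
def IsBaerRing (S : Type*) [Ring S] : Prop :=
  ∀ A : Set S, A.Nonempty → ∃ e : S, e * e = e ∧ rightAnn A = {y | ∃ r : S, y = e * r}

namespace Stmt14Aux

variable {R S : Type*} [Ring R] [Ring S]

/-- `T σ δ i b k` is the coefficient of `X^k` in `X^i * ι b`. -/
def T (σ : R →+* R) (δ : R →+ R) : ℕ → R → ℕ → R
  | 0, b, 0 => b
  | 0, _, _+1 => 0
  | i+1, b, 0 => δ (T σ δ i b 0)
  | i+1, b, k+1 => σ (T σ δ i b k) + δ (T σ δ i b (k+1))

theorem T_gt (σ : R →+* R) (δ : R →+ R) :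
    ∀ (i : ℕ) (b : R) (k : ℕ), i < k → T σ δ i b k = 0
  | 0, b, k+1, _ => by simp [T]
  | i+1, b, k+1, h => by
      rw [T, T_gt σ δ i b k (by omega), T_gt σ δ i b (k+1) (by omega), map_zero, map_zero,
        add_zero]

theorem T_self (σ : R →+* R) (δ : R →+ R) : ∀ (i : ℕ) (b : R), T σ δ i b i = σ^[i] b
  | 0, b => rfl
  | i+1, b => by
      rw [T, T_self σ δ i b, T_gt σ δ i b (i+1) (by omega), map_zero, add_zero,
        Function.iterate_succ_apply']

theorem T_vanish {σ : R →+* R} {δ : R →+ R}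
    (hσf : ∀ a b : R, a * b = 0 → a * σ b = 0)
    (hδf : ∀ a b : R, a * b = 0 → a * δ b = 0) :
    ∀ (i k : ℕ) (a b : R), a * b = 0 → a * T σ δ i b k = 0
  | 0, 0, a, b, h => h
  | 0, k+1, a, b, h => by simp [T]
  | i+1, 0, a, b, h => hδf _ _ (T_vanish hσf hδf i 0 a b h)
  | i+1, k+1, a, b, h => by
      rw [T, mul_add, hσf _ _ (T_vanish hσf hδf i k a b h),
        hδf _ _ (T_vanish hσf hδf i (k+1) a b h), add_zero]

theorem X_pow_mul (σ : R →+* R) (δ : R →+ R) (ι : R →+* S) (X : S)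
    (hcomm : ∀ a : R, X * ι a = ι (σ a) * X + ι (δ a)) :
    ∀ (i : ℕ) (b : R), X ^ i * ι b = ∑ k ∈ range (i+1), ι (T σ δ i b k) * X ^ k
  | 0, b => by simp [T]
  | i+1, b => by
      have step : ∀ c : R, ∀ k : ℕ, X * (ι c * X ^ k) = ι (σ c) * X ^ (k+1) + ι (δ c) * X ^ k := by
        intro c k
        rw [← mul_assoc, hcomm, add_mul, mul_assoc, ← pow_succ']
      calc X ^ (i+1) * ι b = X * (X ^ i * ι b) := by rw [pow_succ', mul_assoc]
        _ = X * ∑ k ∈ range (i+1), ι (T σ δ i b k) * X ^ k := by rw [X_pow_mul σ δ ι X hcomm i b]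
        _ = ∑ k ∈ range (i+1), (ι (σ (T σ δ i b k)) * X ^ (k+1) + ι (δ (T σ δ i b k)) * X ^ k) := by
            rw [mul_sum]; exact Finset.sum_congr rfl fun k _ => step _ k
        _ = (∑ k ∈ range (i+1), ι (σ (T σ δ i b k)) * X ^ (k+1))
              + ∑ k ∈ range (i+1), ι (δ (T σ δ i b k)) * X ^ k := by rw [Finset.sum_add_distrib]
        _ = ∑ k ∈ range (i+2), ι (T σ δ (i+1) b k) * X ^ k := by
            rw [Finset.sum_range_succ' (fun k => ι (T σ δ (i+1) b k) * X ^ k) (i+1)]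
            have h1 : ∀ k, ι (T σ δ (i+1) b (k+1)) * X ^ (k+1)
                = ι (σ (T σ δ i b k)) * X ^ (k+1) + ι (δ (T σ δ i b (k+1))) * X ^ (k+1) := by
              intro k; rw [show T σ δ (i+1) b (k+1) = σ (T σ δ i b k) + δ (T σ δ i b (k+1)) from rfl,
                map_add, add_mul]
            rw [Finset.sum_congr rfl fun k _ => h1 k, Finset.sum_add_distrib]
            have h2 : (∑ k ∈ range (i+1), ι (δ (T σ δ i b (k+1))) * X ^ (k+1))
                = ∑ k ∈ range i, ι (δ (T σ δ i b (k+1))) * X ^ (k+1) := by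
              rw [Finset.sum_range_succ, T_gt σ δ i b (i+1) (by omega), map_zero, map_zero,
                zero_mul, add_zero]
            have h3 : (∑ k ∈ range (i+1), ι (δ (T σ δ i b k)) * X ^ k)
                = (∑ k ∈ range i, ι (δ (T σ δ i b (k+1))) * X ^ (k+1))
                    + ι (δ (T σ δ i b 0)) * X ^ 0 := by
              rw [Finset.sum_range_succ' (fun k => ι (δ (T σ δ i b k)) * X ^ k) i]
            rw [h2, h3, show T σ δ (i+1) b 0 = δ (T σ δ i b 0) from rfl]
            abel

theorem mono_mul (σ : R →+* R) (δ : R →+ R) (ι : R →+* S) (X : S)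
    (hcomm : ∀ a : R, X * ι a = ι (σ a) * X + ι (δ a)) (a b : R) (i j : ℕ) :
    (ι a * X ^ i) * (ι b * X ^ j) = ∑ k ∈ range (i+1), ι (a * T σ δ i b k) * X ^ (k + j) := by
  have h : (ι a * X ^ i) * (ι b * X ^ j) = ι a * (X ^ i * ι b) * X ^ j := by
    rw [mul_assoc, mul_assoc, mul_assoc]
  rw [h, X_pow_mul σ δ ι X hcomm i b, mul_sum, sum_mul]
  exact Finset.sum_congr rfl fun k _ => by rw [map_mul, pow_add, mul_assoc, mul_assoc, mul_assoc]

theorem mono_ann (σ : R →+* R) (δ : R →+ R) (ι : R →+* S) (X : S)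
    (hcomm : ∀ a : R, X * ι a = ι (σ a) * X + ι (δ a))
    (hσf : ∀ a b : R, a * b = 0 → a * σ b = 0)
    (hδf : ∀ a b : R, a * b = 0 → a * δ b = 0)
    (x y : R) (i j : ℕ) (h : x * y = 0) :
    (ι x * X ^ i) * (ι y * X ^ j) = 0 := by
  rw [mono_mul σ δ ι X hcomm]
  exact Finset.sum_eq_zero fun k _ => by
    rw [T_vanish hσf hδf i k x y h, map_zero, zero_mul]

theorem prod_formula (σ : R →+* R) (δ : R →+ R) (ι : R →+* S) (X : S)
    (hcomm : ∀ a : R, X * ι a = ι (σ a) * X + ι (δ a)) (n m : ℕ) (a b : ℕ → R) :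
    (∑ i ∈ range (n+1), ι (a i) * X ^ i) * (∑ j ∈ range (m+1), ι (b j) * X ^ j)
      = ∑ t ∈ range (n+m+1), ι (∑ i ∈ range (n+1), ∑ j ∈ range (m+1), ∑ k ∈ range (i+1),
          if k + j = t then a i * T σ δ i (b j) k else 0) * X ^ t := by
  rw [Finset.sum_mul_sum]
  calc ∑ i ∈ range (n+1), ∑ j ∈ range (m+1), (ι (a i) * X ^ i) * (ι (b j) * X ^ j)
      = ∑ i ∈ range (n+1), ∑ j ∈ range (m+1), ∑ k ∈ range (i+1),
          ι (a i * T σ δ i (b j) k) * X ^ (k + j) :=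
        Finset.sum_congr rfl fun i _ => Finset.sum_congr rfl fun j _ =>
          mono_mul σ δ ι X hcomm _ _ i j
    _ = ∑ i ∈ range (n+1), ∑ j ∈ range (m+1), ∑ k ∈ range (i+1), ∑ t ∈ range (n+m+1),
          (if k + j = t then ι (a i * T σ δ i (b j) k) * X ^ t else 0) := by
        refine Finset.sum_congr rfl fun i hi => Finset.sum_congr rfl fun j hj =>
          Finset.sum_congr rfl fun k hk => ?_
        rw [Finset.sum_ite_eq (range (n+m+1)) (k+j) (fun t => ι (a i * T σ δ i (b j) k) * X ^ t),
          if_pos]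
        simp only [mem_range] at hi hj hk ⊢
        omega
    _ = ∑ t ∈ range (n+m+1), ι (∑ i ∈ range (n+1), ∑ j ∈ range (m+1), ∑ k ∈ range (i+1),
          if k + j = t then a i * T σ δ i (b j) k else 0) * X ^ t := by
        symm
        simp only [map_sum, Finset.sum_mul]
        rw [Finset.sum_comm]
        refine Finset.sum_congr rfl fun i _ => ?_
        rw [Finset.sum_comm]
        refine Finset.sum_congr rfl fun j _ => ?_
        rw [Finset.sum_comm]
        refine Finset.sum_congr rfl fun k _ => Finset.sum_congr rfl fun t _ => ?_
        rw [apply_ite ι, map_zero, ite_mul, zero_mul]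

theorem step (σ : R →+* R) (δ : R →+ R)
    (hred : ∀ x : R, x * x = 0 → x = 0)
    (rev2 : ∀ x y : R, x * y = 0 → y * x = 0)
    (hC : ∀ x y : R, x * σ y = 0 → x * y = 0)
    (hσf : ∀ x y : R, x * y = 0 → x * σ y = 0)
    (hδf : ∀ x y : R, x * y = 0 → x * δ y = 0)
    (n m N : ℕ) (a b : ℕ → R)
    (hP : ∀ i ≤ n, ∀ j ≤ m, N < i + j → a i * b j = 0)
    (hC0 : (∑ i ∈ range (n+1), ∑ j ∈ range (m+1), ∑ k ∈ range (i+1),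
        if k + j = N then a i * T σ δ i (b j) k else 0) = 0) :
    ∀ i ≤ n, ∀ j ≤ m, i + j = N → a i * b j = 0 := by
  have hσi : ∀ (t : ℕ) (x y : R), x * y = 0 → x * σ^[t] y = 0 := by
    intro t; induction t with
    | zero => intro x y h; simpa using h
    | succ t ih => intro x y h; rw [Function.iterate_succ_apply']; exact hσf _ _ (ih x y h)
  have hCi : ∀ (t : ℕ) (x y : R), x * σ^[t] y = 0 → x * y = 0 := by
    intro t; induction t with
    | zero => intro x y h; simpa using h
    | succ t ih => intro x y h; rw [Function.iterate_succ_apply] at h; exact hC _ _ (ih _ _ h)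
  set D : ℕ → R := fun i => if i ≤ N ∧ N - i ≤ m then a i * σ^[i] (b (N - i)) else 0 with hD
  have hCD : (∑ i ∈ range (n+1), D i) = 0 := by
    rw [← hC0]
    refine Finset.sum_congr rfl fun i hi => ?_
    rw [mem_range] at hi
    by_cases hv : i ≤ N ∧ N - i ≤ m
    · simp only [hD]; rw [if_pos hv]
      symm
      have h0 : ∀ j ∈ range (m+1), j ≠ N - i →
          (∑ k ∈ range (i+1), if k + j = N then a i * T σ δ i (b j) k else 0) = 0 := by
        intro j hj hne
        rw [mem_range] at hj
        refine Finset.sum_eq_zero fun k hk => ?_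
        rw [mem_range] at hk
        by_cases hc : k + j = N
        · rw [if_pos hc]
          exact T_vanish hσf hδf i k _ _ (hP i (by omega) j (by omega) (by omega))
        · rw [if_neg hc]
      rw [Finset.sum_eq_single_of_mem (N - i) (mem_range.mpr (by omega)) h0]
      have h1 : ∀ k ∈ range (i+1), k ≠ i →
          (if k + (N - i) = N then a i * T σ δ i (b (N - i)) k else 0) = 0 := by
        intro k hk hne
        rw [mem_range] at hk
        rw [if_neg (by omega)]
      rw [Finset.sum_eq_single_of_mem i (mem_range.mpr (by omega)) h1,
        if_pos (by omega), T_self]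
    · simp only [hD]; rw [if_neg hv]
      symm
      refine Finset.sum_eq_zero fun j hj => Finset.sum_eq_zero fun k hk => ?_
      rw [mem_range] at hj hk
      by_cases hc : k + j = N
      · rw [if_pos hc]
        exact T_vanish hσf hδf i k _ _ (hP i (by omega) j (by omega) (by omega))
      · rw [if_neg hc]
  have hInner : ∀ s : ℕ, s ≤ n → (∑ i ∈ range (s+1), D i) = 0 →
      ∀ i ≤ s, i ≤ N → N - i ≤ m → a i * b (N - i) = 0 := by
    intro s
    induction s with
    | zero =>
      intro _ h0 i hi hiN hNm
      have hi0 : i = 0 := Nat.le_zero.mp hi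
      subst hi0
      rw [Finset.sum_range_one] at h0
      simp only [hD] at h0
      rw [if_pos ⟨hiN, hNm⟩] at h0
      simpa using h0
    | succ s ih =>
      intro hsn h0 i hi hiN hNm
      have key : (s+1 ≤ N ∧ N - (s+1) ≤ m) → a (s+1) * σ^[s+1] (b (N - (s+1))) = 0 := by
        intro hv
        have h1 : (∑ i ∈ range (s+2), D i) * a (s+1) = 0 := by rw [h0, zero_mul]
        rw [Finset.sum_mul] at h1
        have h2 : ∀ t ∈ range (s+2), t ≠ s+1 → D t * a (s+1) = 0 := by
          intro t ht hne
          rw [mem_range] at ht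
          by_cases hvt : t ≤ N ∧ N - t ≤ m
          · simp only [hD]; rw [if_pos hvt]
            have h3 : a (s+1) * b (N - t) = 0 := hP (s+1) hsn (N - t) hvt.2 (by omega)
            have h5 : σ^[t] (b (N - t)) * a (s+1) = 0 := rev2 _ _ (hσi t _ _ h3)
            rw [mul_assoc, h5, mul_zero]
          · simp only [hD]; rw [if_neg hvt, zero_mul]
        rw [Finset.sum_eq_single_of_mem (s+1) (mem_range.mpr (by omega)) h2] at h1
        simp only [hD] at h1
        rw [if_pos hv] at h1
        have h7 : (σ^[s+1] (b (N - (s+1))) * a (s+1))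
            * (σ^[s+1] (b (N - (s+1))) * a (s+1)) = 0 := by
          rw [mul_assoc, ← mul_assoc (a (s+1)), h1, mul_zero]
        exact rev2 _ _ (hred _ h7)
      have hD1 : D (s+1) = 0 := by
        by_cases hv : s+1 ≤ N ∧ N - (s+1) ≤ m
        · simp only [hD]; rw [if_pos hv]; exact key hv
        · simp only [hD]; rw [if_neg hv]
      have h0' : (∑ i ∈ range (s+1), D i) = 0 := by
        rw [Finset.sum_range_succ, hD1, add_zero] at h0; exact h0
      by_cases hi' : i ≤ s
      · exact ih (by omega) h0' i hi' hiN hNm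
      · have hieq : i = s + 1 := by omega
        subst hieq
        exact hCi (s+1) _ _ (key ⟨hiN, hNm⟩)
  intro i hi j hj hij
  have h := hInner n le_rfl hCD i hi (by omega) (by omega)
  rwa [show N - i = j from by omega] at h

theorem armendariz (σ : R →+* R) (δ : R →+ R) (ι : R →+* S) (X : S)
    (hOre : IsOreExtension σ δ ι X)
    (hred : ∀ x : R, x * x = 0 → x = 0)
    (rev2 : ∀ x y : R, x * y = 0 → y * x = 0)
    (hC : ∀ x y : R, x * σ y = 0 → x * y = 0)
    (hσf : ∀ x y : R, x * y = 0 → x * σ y = 0)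
    (hδf : ∀ x y : R, x * y = 0 → x * δ y = 0)
    (n m : ℕ) (a b : ℕ → R)
    (hfg : (∑ i ∈ range (n+1), ι (a i) * X ^ i) * (∑ j ∈ range (m+1), ι (b j) * X ^ j) = 0) :
    ∀ i ≤ n, ∀ j ≤ m, a i * b j = 0 := by
  rw [prod_formula σ δ ι X hOre.commute n m a b] at hfg
  have hC0 := hOre.indep (n+m) _ hfg
  have main : ∀ d : ℕ, ∀ i ≤ n, ∀ j ≤ m, n + m + 1 - d ≤ i + j → a i * b j = 0 := by
    intro d
    induction d with
    | zero =>
      intro i hi j hj hij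
      exact absurd hij (by omega)
    | succ d ih =>
      intro i hi j hj hij
      by_cases hlt : n + m + 1 - d ≤ i + j
      · exact ih i hi j hj hlt
      · refine step σ δ hred rev2 hC hσf hδf n m (i+j) a b ?_ ?_ i hi j hj rfl
        · intro i' hi' j' hj' h'
          exact ih i' hi' j' hj' (by omega)
        · exact hC0 (i+j) (by omega)
  intro i hi j hj
  exact main (n+m+1) i hi j hj (by omega)

end Stmt14Aux

/-- If R is right σ-reversible, satisfies (C_σ) and is Baer, then R[x;σ,δ] is Baer. -/
theorem stmt14 {R S : Type*} [Ring R] [Ring S] (σ : R →+* R) (δ : R →+ R)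
    (hδ : IsSigmaDerivation σ δ) (ι : R →+* S) (X : S)
    (hOre : IsOreExtension σ δ ι X)
    (hrev : ∀ a b : R, a * b = 0 → b * σ a = 0) (hC : CondC σ)
    (hBaer : IsBaerRing R) : IsBaerRing S := by
  classical
  open Stmt14Aux in
  have rev2 : ∀ x y : R, x * y = 0 → y * x = 0 := fun x y h => hC y x (hrev x y h)
  have hσf : ∀ x y : R, x * y = 0 → x * σ y = 0 := fun x y h => hrev y x (rev2 x y h)
  have hred : ∀ x : R, x * x = 0 → x = 0 := by
    intro x hx
    obtain ⟨e, he, hAnn⟩ := hBaer {x} ⟨x, rfl⟩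
    have hxmem : x ∈ rightAnn {x} := by
      intro y hy
      rw [Set.mem_singleton_iff] at hy
      rw [hy]; exact hx
    rw [hAnn] at hxmem
    obtain ⟨r, hr⟩ := hxmem
    have hemem : e ∈ rightAnn {x} := by rw [hAnn]; exact ⟨1, (mul_one e).symm⟩
    have hxe : x * e = 0 := hemem x rfl
    have hex : e * x = 0 := rev2 _ _ hxe
    calc x = e * r := hr
      _ = e * (e * r) := by rw [← mul_assoc, he]
      _ = e * x := by rw [← hr]
      _ = 0 := hex
  have hδf : ∀ x y : R, x * y = 0 → x * δ y = 0 := by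
    intro x y h
    have h1 : y * σ x = 0 := hrev x y h
    have h2 : σ x * δ y + δ x * y = 0 := by
      have h2' := hδ x y
      rw [h, map_zero] at h2'
      exact h2'.symm
    have h3 : σ x * δ y * σ x = 0 := by
      have h3' := congrArg (fun z => z * σ x) h2
      simp only [add_mul, zero_mul] at h3'
      rw [mul_assoc (δ x), h1, mul_zero, add_zero] at h3'
      exact h3'
    have h4 : (δ y * σ x) * (δ y * σ x) = 0 := by
      rw [mul_assoc, ← mul_assoc (σ x), h3, mul_zero]
    have h5 : δ y * σ x = 0 := hred _ h4
    exact rev2 _ _ (hC _ _ h5)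
  intro A hA
  obtain ⟨f₀, hf₀⟩ := hA
  set Ac : Set R := {r | ∃ f ∈ A, ∃ n : ℕ, ∃ c : ℕ → R,
      f = ∑ i ∈ Finset.range (n+1), ι (c i) * X ^ i ∧ ∃ i ≤ n, c i = r} with hAcdef
  obtain ⟨n₀, c₀, hrep₀⟩ := hOre.span f₀
  have hAcne : Ac.Nonempty := ⟨c₀ 0, f₀, hf₀, n₀, c₀, hrep₀, 0, Nat.zero_le _, rfl⟩
  obtain ⟨e, he, hAnnR⟩ := hBaer Ac hAcne
  have hemul : ∀ r ∈ Ac, r * e = 0 := by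
    have hmem : e ∈ rightAnn Ac := by rw [hAnnR]; exact ⟨1, (mul_one e).symm⟩
    exact fun r hr => hmem r hr
  refine ⟨ι e, by rw [← map_mul, he], ?_⟩
  ext y
  constructor
  · intro hy
    obtain ⟨m, b, hyrep⟩ := hOre.span y
    have hbj : ∀ j, ∃ r : R, j ≤ m → b j = e * r := by
      intro j
      by_cases hj : j ≤ m
      · have hb : b j ∈ rightAnn Ac := by
          intro r hr
          obtain ⟨f, hfA, n, c, hfrep, i, hin, hci⟩ := hr
          have hfg : (∑ i ∈ Finset.range (n+1), ι (c i) * X ^ i) *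
              (∑ j ∈ Finset.range (m+1), ι (b j) * X ^ j) = 0 := by
            rw [← hfrep, ← hyrep]
            exact hy f hfA
          have harm := Stmt14Aux.armendariz σ δ ι X hOre hred rev2 hC hσf hδf n m c b hfg i hin j hj
          rwa [hci] at harm
        rw [hAnnR] at hb
        obtain ⟨r, hr⟩ := hb
        exact ⟨r, fun _ => hr⟩
      · exact ⟨0, fun h' => absurd h' hj⟩
    choose rr hrr using hbj
    refine ⟨∑ j ∈ Finset.range (m+1), ι (rr j) * X ^ j, ?_⟩
    rw [hyrep, Finset.mul_sum]
    refine Finset.sum_congr rfl fun j hj => ?_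
    rw [mem_range] at hj
    rw [hrr j (by omega), map_mul, mul_assoc]
  · rintro ⟨r, rfl⟩
    intro f hfA
    obtain ⟨n, c, hfrep⟩ := hOre.span f
    have hfe : f * ι e = 0 := by
      rw [hfrep, Finset.sum_mul]
      refine Finset.sum_eq_zero fun i hi => ?_
      rw [mem_range] at hi
      have hce : c i * e = 0 := hemul (c i) ⟨f, hfA, n, c, hfrep, i, by omega, rfl⟩
      have heX : (ι e : S) = ι e * X ^ 0 := by rw [pow_zero, mul_one]
      rw [heX]
      exact Stmt14Aux.mono_ann σ δ ι X hOre.commute hσf hδf (c i) e i 0 hce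
    rw [← mul_assoc, hfe, zero_mul]
end

section
/- Let R be a right σ-reversible ring satisfying condition (C_σ) with σ(1) = 1, and δ a σ-derivation. If R is a quasi-Baer ring, then the Ore extension R[x;σ,δ] is a quasi-Baer ring. -/
open Finset

/-- A subset is a right ideal. -/
def IsRightIdealSet {S : Type*} [Ring S] (I : Set S) : Prop :=
  0 ∈ I ∧ (∀ a ∈ I, ∀ b ∈ I, a + b ∈ I) ∧ (∀ a ∈ I, ∀ r : S, a * r ∈ I)

/-- A ring is quasi-Baer: the right annihilator of every right ideal equals eS for an
idempotent e. -/
def IsQuasiBaerRing (S : Type*) [Ring S] : Prop :=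
  ∀ I : Set S, IsRightIdealSet I →
    ∃ e : S, e * e = e ∧ rightAnn I = {y | ∃ r : S, y = e * r}

/-!
Right σ-reversibility together with (C_σ) makes `R` reversible (`ab = 0 → ba = 0`), hence
semicommutative, and a semicommutative quasi-Baer ring is reduced. Then `R` is σ-compatible
(`ab = 0 ↔ aσ(b) = 0`) and δ-compatible (`ab = 0 → aδ(b) = 0`), and for such rings
`f g = 0` in `R[x;σ,δ]` forces `aᵢ bⱼ = 0` for all coefficients. Consequently, if `A ⊆ R` is the set
of coefficients of the elements of a right ideal `I` and `r_R(A) = eR` with `e` idempotent, then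
`r(I) = e R[x;σ,δ]`.
-/

def IsSigmaCompatible {R : Type*} [Ring R] (σ : R →+* R) : Prop :=
  ∀ a b : R, a * b = 0 ↔ a * σ b = 0

def IsDeltaCompatible {R : Type*} [Ring R] (δ : R →+ R) : Prop :=
  ∀ a b : R, a * b = 0 → a * δ b = 0

section Reduced

variable {R : Type*} [Ring R] [IsReduced R]

theorem IsReduced.eq_zero_of_mul_self_eq_zero {a : R} (h : a * a = 0) : a = 0 :=
  IsReduced.eq_zero a ⟨2, by rwa [sq]⟩

theorem IsReduced.mul_eq_zero_symm {a b : R} (h : a * b = 0) : b * a = 0 :=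
  IsReduced.eq_zero_of_mul_self_eq_zero <| by
    rw [mul_assoc, ← mul_assoc a, h, zero_mul, mul_zero]

theorem IsReduced.mul_mul_eq_zero {a b : R} (h : a * b = 0) (r : R) : a * r * b = 0 :=
  IsReduced.eq_zero_of_mul_self_eq_zero <| by
    rw [show a * r * b * (a * r * b) = a * r * (b * a) * (r * b) by noncomm_ring,
      IsReduced.mul_eq_zero_symm h, mul_zero, zero_mul]

theorem IsReduced.mul_eq_zero_of_mul_mul_self_eq_zero {u v : R} (h : u * v * v = 0) :
    u * v = 0 :=
  IsReduced.eq_zero_of_mul_self_eq_zero <| by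
    rw [mul_assoc u, IsReduced.mul_eq_zero_symm h, mul_zero]

end Reduced

section Compatible

variable {R : Type*} [Ring R] {σ : R →+* R}

theorem IsSigmaCompatible.mul_iterate_eq_zero_iff (hσ : IsSigmaCompatible σ) (a b : R) (i : ℕ) :
    a * (⇑σ)^[i] b = 0 ↔ a * b = 0 := by
  induction i with
  | zero => rfl
  | succ i ih => rw [Function.iterate_succ_apply', ← hσ, ih]

theorem isDeltaCompatible_of_isReduced [IsReduced R] (hσ : IsSigmaCompatible σ) {δ : R →+ R}
    (hδ : IsSigmaDerivation σ δ) : IsDeltaCompatible δ := by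
  intro a b hab
  have hδba : σ b * δ a + δ b * a = 0 := by
    rw [← hδ, IsReduced.mul_eq_zero_symm hab, map_zero]
  have haδba : a * δ b * a = 0 := by
    simpa only [mul_add, ← mul_assoc, (hσ a b).1 hab, zero_mul, zero_add, mul_zero]
      using congrArg (a * ·) hδba
  exact IsReduced.eq_zero_of_mul_self_eq_zero <| by
    rw [← mul_assoc, haδba, zero_mul]

theorem IsSigmaCompatible.mul_eq_zero_of_sum_antidiagonal [IsReduced R]
    (hσ : IsSigmaCompatible σ) {a b : ℕ → R} {d : ℕ} {P : Finset (ℕ × ℕ)}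
    (hP : ∀ x ∈ P, x.1 + x.2 = d) (hgt : ∀ i j, d < i + j → a i * b j = 0)
    (hsum : ∑ x ∈ P, a x.1 * (⇑σ)^[x.1] (b x.2) = 0) : ∀ x ∈ P, a x.1 * b x.2 = 0 := by
  suffices ∀ p q, (p, q) ∈ P → a p * b q = 0 from fun x hx => this x.1 x.2 hx
  intro p
  induction p using Nat.strong_induction_on with
  | _ p ih =>
  intro q hpq
  have hother : ∀ x ∈ P, x ≠ (p, q) → a x.1 * (⇑σ)^[x.1] (b x.2) * (⇑σ)^[p] (b q) = 0 := by
    intro x hx hne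
    have hxd := hP x hx
    have hpqd := hP _ hpq
    rcases lt_trichotomy x.1 p with hlt | heq | hlt
    · rw [(hσ.mul_iterate_eq_zero_iff _ _ _).2 (ih x.1 hlt x.2 hx), zero_mul]
    · exact absurd (Prod.ext heq (by simp only at hpqd; omega)) hne
    · exact IsReduced.mul_mul_eq_zero
        ((hσ.mul_iterate_eq_zero_iff _ _ _).2 (hgt x.1 q (by simp only at hpqd; omega))) _
  -- right multiplication by `σ^[p] (b q)` isolates the `(p, q)` term of the sum
  have hsq : a p * (⇑σ)^[p] (b q) * (⇑σ)^[p] (b q) = 0 := by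
    rw [← sum_eq_single_of_mem (p, q) hpq hother, ← sum_mul, hsum, zero_mul]
  exact (hσ.mul_iterate_eq_zero_iff _ _ _).1
    (IsReduced.mul_eq_zero_of_mul_mul_self_eq_zero hsq)

end Compatible

section QuasiBaer

variable {R : Type*} [Ring R]

theorem IsIdempotentElem.mul_mul_self_of_semicommutative
    (hsemi : ∀ a b r : R, a * b = 0 → a * r * b = 0) {e : R} (he : IsIdempotentElem e)
    (r : R) : e * r * e = e * r := by
  have h := hsemi e (1 - e) r (by rw [mul_sub, mul_one, he.eq, sub_self])
  rwa [mul_sub, mul_one, sub_eq_zero, eq_comm] at h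

theorem IsQuasiBaerRing.exists_rightAnn_eq (hQB : IsQuasiBaerRing R)
    (hsemi : ∀ a b r : R, a * b = 0 → a * r * b = 0) (A : Set R) :
    ∃ e : R, IsIdempotentElem e ∧ rightAnn A = {y | ∃ r : R, y = e * r} := by
  let J : Set R := {x | ∀ u ∈ rightAnn A, x * u = 0}
  have hJ : IsRightIdealSet J :=
    ⟨fun u _ => zero_mul u,
      fun x hx y hy u hu => by rw [add_mul, hx u hu, hy u hu, add_zero],
      fun x hx r u hu => by
        rw [mul_assoc]
        exact hx (r * u) fun a ha => by rw [← mul_assoc]; exact hsemi a u r (hu a ha)⟩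
  have hAJ : rightAnn J = rightAnn A :=
    Set.Subset.antisymm (fun u hu a ha => hu a fun v hv => hv a ha) fun u hu x hx => hx u hu
  obtain ⟨e, he, hJe⟩ := hQB J hJ
  exact ⟨e, he, hAJ ▸ hJe⟩

theorem isReduced_of_isQuasiBaerRing (hQB : IsQuasiBaerRing R)
    (hsemi : ∀ a b r : R, a * b = 0 → a * r * b = 0) : IsReduced R := by
  refine (isReduced_iff_pow_one_lt 2 one_lt_two).2 fun a ha => ?_
  rw [sq] at ha
  obtain ⟨e, he, hae⟩ := hQB.exists_rightAnn_eq hsemi {a}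
  have ha_mem : a ∈ rightAnn {a} := by simpa [rightAnn] using ha
  have he_mem : e ∈ rightAnn {a} := hae ▸ ⟨1, (mul_one e).symm⟩
  obtain ⟨r, rfl⟩ := hae ▸ ha_mem
  calc e * r = e * r * e := (he.mul_mul_self_of_semicommutative hsemi r).symm
    _ = 0 := he_mem _ rfl

end QuasiBaer

section OreCoeff

variable {R : Type*} [Ring R] (σ : R →+* R) (δ : R →+ R)

/-- `oreCoeff σ δ i k b` is the coefficient of `X ^ k` in `X ^ i * b`. -/
def oreCoeff : ℕ → ℕ → R → R
  | 0, 0, b => b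
  | 0, _ + 1, _ => 0
  | i + 1, 0, b => δ (oreCoeff i 0 b)
  | i + 1, k + 1, b => σ (oreCoeff i k b) + δ (oreCoeff i (k + 1) b)

theorem oreCoeff_of_lt {i k : ℕ} (h : i < k) (b : R) : oreCoeff σ δ i k b = 0 := by
  induction i generalizing k with
  | zero => obtain ⟨k, rfl⟩ := Nat.exists_eq_add_of_lt h; rfl
  | succ i ih =>
    obtain ⟨k, rfl⟩ : ∃ k', k = k' + 1 := Nat.exists_eq_succ_of_ne_zero (by omega)
    simp only [oreCoeff, ih (by omega : i < k), ih (by omega : i < k + 1), map_zero, add_zero]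

theorem oreCoeff_self (i : ℕ) (b : R) : oreCoeff σ δ i i b = (⇑σ)^[i] b := by
  induction i with
  | zero => rfl
  | succ i ih =>
    simp only [oreCoeff, ih, oreCoeff_of_lt σ δ (Nat.lt_succ_self i), map_zero, add_zero,
      Function.iterate_succ_apply']

variable {σ δ}

theorem mul_oreCoeff_eq_zero (hσ : IsSigmaCompatible σ) (hδ : IsDeltaCompatible δ) {a b : R}
    (h : a * b = 0) (i k : ℕ) : a * oreCoeff σ δ i k b = 0 := by
  induction i generalizing k with
  | zero => cases k <;> simp [oreCoeff, h]
  | succ i ih =>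
    cases k with
    | zero => exact hδ _ _ (ih 0)
    | succ k => rw [oreCoeff, mul_add, (hσ _ _).1 (ih k), hδ _ _ (ih (k + 1)), add_zero]

theorem sum_ite_mul_oreCoeff (hσ : IsSigmaCompatible σ) (hδ : IsDeltaCompatible δ) {a b : R}
    {i j n d : ℕ} (hi : i ≤ n) (hgt : d < i + j → a * b = 0) :
    ∑ k ∈ range (n + 1), (if k + j = d then a * oreCoeff σ δ i k b else 0)
      = if i + j = d then a * (⇑σ)^[i] b else 0 := by
  rw [sum_eq_single_of_mem i (mem_range.2 (Nat.lt_succ_of_le hi)), oreCoeff_self]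
  intro k _ hki
  split_ifs with hkj
  · rcases lt_or_gt_of_ne hki with hlt | hlt
    · exact mul_oreCoeff_eq_zero hσ hδ (hgt (by omega)) i k
    · rw [oreCoeff_of_lt σ δ hlt, mul_zero]
  · rfl

end OreCoeff

namespace IsOreExtension

variable {R S : Type*} [Ring R] [Ring S] {σ : R →+* R} {δ : R →+ R} {ι : R →+* S} {X : S}

theorem pow_mul (hOre : IsOreExtension σ δ ι X) (i : ℕ) (b : R) :
    X ^ i * ι b = ∑ k ∈ range (i + 1), ι (oreCoeff σ δ i k b) * X ^ k := by
  induction i generalizing b with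
  | zero => simp [oreCoeff]
  | succ i ih =>
    have hX : ∀ (c : R) (k : ℕ), X * (ι c * X ^ k) = ι (σ c) * X ^ (k + 1) + ι (δ c) * X ^ k :=
      fun c k => by rw [← mul_assoc, hOre.commute, add_mul, mul_assoc, ← pow_succ']
    have hδ : ∑ k ∈ range (i + 1), ι (δ (oreCoeff σ δ i k b)) * X ^ k
        = ∑ k ∈ range (i + 2), ι (δ (oreCoeff σ δ i k b)) * X ^ k := by
      rw [sum_range_succ _ (i + 1), oreCoeff_of_lt σ δ (Nat.lt_succ_self i), map_zero, map_zero,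
        zero_mul, add_zero]
    rw [pow_succ', mul_assoc, ih, mul_sum, sum_congr rfl fun k _ => hX _ k, sum_add_distrib, hδ,
      sum_range_succ' _ (i + 1), sum_range_succ' _ (i + 1)]
    simp only [oreCoeff, map_add, add_mul, sum_add_distrib]
    abel

theorem pow_mul_of_le (hOre : IsOreExtension σ δ ι X) {i N : ℕ} (hi : i ≤ N) (b : R) :
    X ^ i * ι b = ∑ k ∈ range (N + 1), ι (oreCoeff σ δ i k b) * X ^ k := by
  rw [hOre.pow_mul]
  refine sum_subset (range_subset_range.2 (by omega)) fun k _ hk => ?_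
  rw [oreCoeff_of_lt σ δ (by simpa using hk), map_zero, zero_mul]

theorem mul_pow_mul_eq_zero (hOre : IsOreExtension σ δ ι X) (hσ : IsSigmaCompatible σ)
    (hδ : IsDeltaCompatible δ) {a b : R} (h : a * b = 0) (i : ℕ) : ι a * X ^ i * ι b = 0 := by
  rw [mul_assoc, hOre.pow_mul, mul_sum]
  refine sum_eq_zero fun k _ => ?_
  rw [← mul_assoc, ← map_mul, mul_oreCoeff_eq_zero hσ hδ h, map_zero, zero_mul]

theorem sum_filter_eq_zero (hOre : IsOreExtension σ δ ι X) {α : Type*} (F : Finset α)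
    (c : α → R) (deg : α → ℕ) (h : ∑ x ∈ F, ι (c x) * X ^ deg x = 0) (d : ℕ) :
    ∑ x ∈ F with deg x = d, c x = 0 := by
  set N := F.sup deg
  have hdeg : ∀ x ∈ F, deg x ≤ N := fun x hx => le_sup hx
  have hgroup : ∑ x ∈ F, ι (c x) * X ^ deg x
      = ∑ d ∈ range (N + 1), ι (∑ x ∈ F with deg x = d, c x) * X ^ d := by
    rw [← sum_fiberwise_of_maps_to fun x hx => mem_range.2 (Nat.lt_succ_of_le (hdeg x hx))]
    refine sum_congr rfl fun d _ => ?_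
    rw [map_sum, sum_mul]
    exact sum_congr rfl fun x hx => by rw [(mem_filter.1 hx).2]
  by_cases hd : d ≤ N
  · exact hOre.indep N _ (hgroup ▸ h) d hd
  · refine sum_eq_zero fun x hx => absurd ?_ hd
    rw [← (mem_filter.1 hx).2]
    exact hdeg x (mem_filter.1 hx).1

theorem sum_mul_sum (hOre : IsOreExtension σ δ ι X) (n m : ℕ) (a b : ℕ → R) :
    (∑ i ∈ range (n + 1), ι (a i) * X ^ i) * (∑ j ∈ range (m + 1), ι (b j) * X ^ j)
      = ∑ x ∈ (range (n + 1) ×ˢ range (m + 1)) ×ˢ range (n + 1),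
          ι (a x.1.1 * oreCoeff σ δ x.1.1 x.2 (b x.1.2)) * X ^ (x.2 + x.1.2) := by
  rw [Finset.sum_mul_sum, sum_product, sum_product]
  refine sum_congr rfl fun i hi => sum_congr rfl fun j _ => ?_
  rw [show ι (a i) * X ^ i * (ι (b j) * X ^ j) = ι (a i) * (X ^ i * ι (b j)) * X ^ j by
      noncomm_ring, hOre.pow_mul_of_le (Nat.lt_succ_iff.1 (mem_range.1 hi)), mul_sum, sum_mul]
  refine sum_congr rfl fun k _ => ?_
  rw [← mul_assoc, ← map_mul, mul_assoc, ← pow_add]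

/-- Downward induction on the degree `d`: once all products `a i * b j` with `i + j > d` vanish,
the coefficient of `X ^ d` in the product reduces to `∑_{i + j = d} a i * σ^[i] (b j)`. -/
theorem coeff_mul_coeff_eq_zero_of_bounded (hOre : IsOreExtension σ δ ι X) [IsReduced R]
    (hσ : IsSigmaCompatible σ) (hδ : IsDeltaCompatible δ) {n m : ℕ} {a b : ℕ → R}
    (ha : ∀ i, n < i → a i = 0) (hb : ∀ j, m < j → b j = 0)
    (h : (∑ i ∈ range (n + 1), ι (a i) * X ^ i) * (∑ j ∈ range (m + 1), ι (b j) * X ^ j) = 0) :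
    ∀ i j, a i * b j = 0 := by
  have hcoeff : ∀ d, ∑ i ∈ range (n + 1), ∑ j ∈ range (m + 1), ∑ k ∈ range (n + 1),
      (if k + j = d then a i * oreCoeff σ δ i k (b j) else 0) = 0 := fun d => by
    simpa only [sum_filter, sum_product] using
      hOre.sum_filter_eq_zero _ _ _ ((hOre.sum_mul_sum n m a b).symm.trans h) d
  have hstep : ∀ d, (∀ i j, d < i + j → a i * b j = 0) → ∀ i j, i + j = d → a i * b j = 0 := by
    intro d hgt i j hij
    by_cases hin : i ≤ n
    swap
    · rw [ha i (by omega), zero_mul]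
    by_cases hjm : j ≤ m
    swap
    · rw [hb j (by omega), mul_zero]
    have hdiag : ∑ x ∈ range (n + 1) ×ˢ range (m + 1) with x.1 + x.2 = d,
        a x.1 * (⇑σ)^[x.1] (b x.2) = 0 := by
      rw [sum_filter, sum_product]
      refine Eq.trans (sum_congr rfl fun i' hi' => sum_congr rfl fun j' _ => ?_) (hcoeff d)
      exact (sum_ite_mul_oreCoeff hσ hδ (Nat.lt_succ_iff.1 (mem_range.1 hi')) (hgt i' j')).symm
    refine hσ.mul_eq_zero_of_sum_antidiagonal (fun x hx => (mem_filter.1 hx).2) hgt hdiag (i, j) ?_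
    simp only [mem_filter, mem_product, mem_range]
    omega
  have hdesc : ∀ t i j, n + m < i + j + t → a i * b j = 0 := by
    intro t
    induction t with
    | zero =>
      intro i j hij
      by_cases hin : i ≤ n
      · rw [hb j (by omega), mul_zero]
      · rw [ha i (by omega), zero_mul]
    | succ t ih =>
      intro i j hij
      by_cases hlt : n + m < i + j + t
      · exact ih i j hlt
      · exact hstep (i + j) (fun i' j' _ => ih i' j' (by omega)) i j rfl
  exact fun i j => hdesc (n + m + 1) i j (by omega)

theorem coeff_mul_coeff_eq_zero (hOre : IsOreExtension σ δ ι X) [IsReduced R]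
    (hσ : IsSigmaCompatible σ) (hδ : IsDeltaCompatible δ) {n m : ℕ} {a b : ℕ → R}
    (h : (∑ i ∈ range (n + 1), ι (a i) * X ^ i) * (∑ j ∈ range (m + 1), ι (b j) * X ^ j) = 0) :
    ∀ i ≤ n, ∀ j ≤ m, a i * b j = 0 := by
  intro i hi j hj
  have htrunc : ∀ (c : ℕ → R) (N : ℕ), ∑ k ∈ range (N + 1), ι (c k) * X ^ k
      = ∑ k ∈ range (N + 1), ι (if k ≤ N then c k else 0) * X ^ k := fun c N =>
    sum_congr rfl fun k hk => by rw [if_pos (Nat.lt_succ_iff.1 (mem_range.1 hk))]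
  rw [htrunc a, htrunc b] at h
  simpa only [if_pos hi, if_pos hj] using hOre.coeff_mul_coeff_eq_zero_of_bounded hσ hδ
    (fun i hi => if_neg (by omega)) (fun j hj => if_neg (by omega)) h i j

theorem isQuasiBaerRing (hOre : IsOreExtension σ δ ι X) [IsReduced R]
    (hσ : IsSigmaCompatible σ) (hδ : IsDeltaCompatible δ) (hQB : IsQuasiBaerRing R) :
    IsQuasiBaerRing S := by
  intro I _
  let A : Set R := {r | ∃ (n : ℕ) (c : ℕ → R),
    ∑ i ∈ range (n + 1), ι (c i) * X ^ i ∈ I ∧ ∃ i ≤ n, r = c i}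
  obtain ⟨e, he, hAe⟩ := hQB.exists_rightAnn_eq (fun _ _ r h => IsReduced.mul_mul_eq_zero h r) A
  have he_mem : e ∈ rightAnn A := hAe ▸ ⟨1, (mul_one e).symm⟩
  refine ⟨ι e, by rw [← map_mul, he.eq], Set.ext fun g => ⟨fun hg => ?_, ?_⟩⟩
  · obtain ⟨m, b, rfl⟩ := hOre.span g
    have hb : ∀ j ≤ m, e * b j = b j := by
      intro j hj
      have hbA : b j ∈ rightAnn A := by
        rintro _ ⟨n, c, hcI, i, hi, rfl⟩
        exact hOre.coeff_mul_coeff_eq_zero hσ hδ (hg _ hcI) i hi j hj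
      obtain ⟨r, hr⟩ := hAe ▸ hbA
      rw [hr, ← mul_assoc, he.eq]
    refine ⟨∑ j ∈ range (m + 1), ι (b j) * X ^ j, ?_⟩
    rw [mul_sum]
    refine sum_congr rfl fun j hj => ?_
    rw [← mul_assoc, ← map_mul, hb j (Nat.lt_succ_iff.1 (mem_range.1 hj))]
  · rintro ⟨s, rfl⟩ f hf
    obtain ⟨n, c, rfl⟩ := hOre.span f
    rw [← mul_assoc, sum_mul, sum_eq_zero, zero_mul]
    intro i hi
    exact hOre.mul_pow_mul_eq_zero hσ hδ
      (he_mem _ ⟨n, c, hf, i, Nat.lt_succ_iff.1 (mem_range.1 hi), rfl⟩) i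

end IsOreExtension

/-- If R is right σ-reversible, satisfies (C_σ) and is quasi-Baer, then R[x;σ,δ] is
quasi-Baer. -/
theorem stmt15 {R S : Type*} [Ring R] [Ring S] (σ : R →+* R) (δ : R →+ R)
    (hδ : IsSigmaDerivation σ δ) (ι : R →+* S) (X : S)
    (hOre : IsOreExtension σ δ ι X)
    (hrev : ∀ a b : R, a * b = 0 → b * σ a = 0) (hC : CondC σ)
    (hQB : IsQuasiBaerRing R) : IsQuasiBaerRing S := by
  have hreversible : ∀ a b : R, a * b = 0 → b * a = 0 := fun a b h => hC b a (hrev a b h)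
  have hsemi : ∀ a b r : R, a * b = 0 → a * r * b = 0 := fun a b r h =>
    hreversible b (a * r) (by rw [← mul_assoc, hreversible a b h, zero_mul])
  have : IsReduced R := isReduced_of_isQuasiBaerRing hQB hsemi
  have hσ : IsSigmaCompatible σ := fun a b => ⟨fun h => hrev b a (hreversible a b h), hC a b⟩
  exact hOre.isQuasiBaerRing hσ (isDeltaCompatible_of_isReduced hσ hδ) hQB
end

section
/- Let R be a right σ-reversible ring with σ(1) = 1 and δ a σ-derivation. Then for every idempotent e ∈ R, the left ideal Re is (σ,δ)-stable, i.e., σ(Re) ⊆ Re and δ(Re) ⊆ Re. -/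
/-- If R is right σ-reversible (σ(1)=1), then Re is (σ,δ)-stable for every
idempotent e: σ(Re) ⊆ Re and δ(Re) ⊆ Re. -/
theorem stmt16 {R : Type*} [Ring R] (σ : R →+* R) (δ : R →+ R)
    (hδ : IsSigmaDerivation σ δ)
    (hrev : ∀ a b : R, a * b = 0 → b * σ a = 0) :
    ∀ e : R, e * e = e →
      (∀ r : R, ∃ s : R, σ (r * e) = s * e) ∧ (∀ r : R, ∃ s : R, δ (r * e) = s * e) := by
  intro e he
  -- Step 1: σ(e) = e
  have h1 : e * (1 - e) = 0 := by rw [mul_sub, mul_one, he, sub_self]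
  have h2 : (1 - e) * e = 0 := by rw [sub_mul, one_mul, he, sub_self]
  have r1 := hrev _ _ h1  -- (1-e) * σ e = 0
  have r2 := hrev _ _ h2  -- e * σ (1-e) = 0
  have hσ1 : σ e = e * σ e := by
    rw [sub_mul, one_mul, sub_eq_zero] at r1; exact r1
  have hσ2 : e = e * σ e := by
    rw [map_sub, map_one, mul_sub, mul_one, sub_eq_zero] at r2; exact r2
  have hσe : σ e = e := by rw [hσ1, ← hσ2]
  -- Step 2: δ(e) = δ(e) * e
  have hd : δ e = e * δ e + δ e * e := by
    have := hδ e e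
    rwa [he, hσe] at this
  have h3 : e * δ e * e = 0 := by
    have h := congrArg (fun x => e * x) hd
    simp only [mul_add, ← mul_assoc, he] at h
    -- h : e * δ e = e * δ e + e * δ e * e
    have := sub_eq_zero.mpr h
    rwa [sub_add_cancel_left, neg_eq_zero] at this
  have h4 : (1 - e) * (e * δ e) = 0 := by
    rw [sub_mul, one_mul, ← mul_assoc, he, sub_self]
  have r3 := hrev _ _ h4
  have h5 : e * δ e = 0 := by
    rw [map_sub, map_one, hσe, mul_sub, mul_one, h3, sub_zero] at r3
    exact r3
  have hde : δ e = δ e * e := by conv_lhs => rw [hd, h5, zero_add]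
  constructor
  · intro r
    exact ⟨σ r, by rw [map_mul, hσe]⟩
  · intro r
    refine ⟨σ r * δ e + δ r, ?_⟩
    rw [hδ r e]
    conv_lhs => rw [hde]
    noncomm_ring
end
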